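/- arXiv:2209.04519 — 8 statements merged into one kernel-verified Lean document; each statement's English description precedes it below -/
import Mathlib

section
/- If (D,b) is a bilinear T-form, then the orthogonal direct sum (D × D, b ⊕ b) is split: there exists a subgroup H of D × D with H^⊥ = H, where the orthogonal complement is taken with respect to b ⊕ b. -/
/-- If `(D,b)` is a bilinear T-form (a nondegenerate symmetric biadditive form on a
finite abelian group which is isomorphic to its negation), then the orthogonal direct
sum `(D × D, b ⊕ b)` is split: there is a subgroup `H` of `D × D` with `H^⊥ = H`. -/
theorem double_of_T_form_is_split
    {D : Type*} [AddCommGroup D] [Fintype D]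
    (b : D → D → AddCircle (1:ℚ))
    (hsymm : ∀ x y : D, b x y = b y x)
    (hadd : ∀ x y z : D, b (x + y) z = b x z + b y z)
    (hnd : ∀ x : D, (∀ y : D, b x y = 0) → x = 0)
    (hT : ∃ f : D ≃+ D, ∀ x y : D, b (f x) (f y) = - b x y) :
    ∃ H : AddSubgroup (D × D),
      ∀ z : D × D, (∀ h ∈ H, b z.1 h.1 + b z.2 h.2 = 0) ↔ z ∈ H := by
  obtain ⟨f, hf⟩ := hT
  have hzero : ∀ z : D, b 0 z = 0 := by
    intro z
    have := hadd 0 0 z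
    simpa using this.symm
  have hneg : ∀ x z : D, b (-x) z = - b x z := by
    intro x z
    have := hadd x (-x) z
    simp [hzero] at this
    exact eq_neg_of_add_eq_zero_right this.symm
  have hsub : ∀ x y z : D, b (x - y) z = b x z - b y z := by
    intro x y z
    rw [sub_eq_add_neg, hadd, hneg, sub_eq_add_neg]
  refine ⟨{ carrier := {p | p.2 = f p.1},
            zero_mem' := by simp,
            add_mem' := by
              rintro ⟨a, a'⟩ ⟨c, c'⟩ (ha : a' = f a) (hc : c' = f c)
              simp [ha, hc]
            neg_mem' := by
              rintro ⟨a, a'⟩ (ha : a' = f a)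
              simp [ha] }, ?_⟩
  rintro ⟨z1, z2⟩
  constructor
  · intro h
    have key : ∀ x : D, b (z1 - f.symm z2) x = 0 := by
      intro x
      have h1 := h (x, f x) rfl
      simp only at h1
      have h2 : b z2 (f x) = - b (f.symm z2) x := by
        have := hf (f.symm z2) x
        simpa using this
      rw [hsub, sub_eq_add_neg, ← h2]
      exact h1
    have := hnd _ key
    have : z1 = f.symm z2 := sub_eq_zero.mp this
    show z2 = f z1
    rw [this]; simp
  · rintro (hz : z2 = f z1) ⟨h1, h2⟩ (hh : h2 = f h1)
    simp only [hz, hh, hf]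
    abel
end

section
/- Let p be a prime with p ≡ 1 (mod 4) and let D be a finite abelian p-group. Then every nondegenerate symmetric biadditive form b : D × D → ℚ/ℤ is a bilinear T-form: (D,b) is isomorphic to (D,−b). -/
/-- Hensel lift of a square root of `-1` modulo powers of a prime `p ≡ 1 (mod 4)`. -/
lemma exists_sqrt_neg_one_mod_prime_pow {p : ℕ} (hp : p.Prime) (hmod : p % 4 = 1) (N : ℕ) :
    ∃ u : ℤ, (p : ℤ) ^ N ∣ u * u + 1 := by
  haveI : Fact p.Prime := ⟨hp⟩
  induction N with
  | zero => exact ⟨0, by simpa using one_dvd _⟩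
  | succ N ih =>
    rcases Nat.eq_zero_or_pos N with hN0 | hNpos
    · subst hN0
      obtain ⟨y, hy⟩ : IsSquare (-1 : ZMod p) :=
        ZMod.exists_sq_eq_neg_one_iff.mpr (by omega)
      refine ⟨(y.val : ℤ), ?_⟩
      have h0 : (((y.val : ℤ) * (y.val : ℤ) + 1 : ℤ) : ZMod p) = 0 := by
        push_cast
        rw [ZMod.natCast_val, ZMod.cast_id]
        rw [show (y : ZMod p) * y = -1 from hy.symm]
        ring
      simpa using (ZMod.intCast_zmod_eq_zero_iff_dvd _ p).mp h0
    · obtain ⟨M, rfl⟩ : ∃ M, N = M + 1 := ⟨N - 1, by omega⟩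
      obtain ⟨u, c, hc⟩ := ih
      have h2ne : (2 : ZMod p) ≠ 0 := by
        intro h
        have h2 : p ∣ 2 := (ZMod.natCast_eq_zero_iff 2 p).mp (by exact_mod_cast h)
        have := Nat.le_of_dvd (by norm_num) h2
        have := hp.two_le
        omega
      have hpd : (p : ℤ) ∣ u * u + 1 :=
        dvd_trans (dvd_pow_self (p : ℤ) (Nat.succ_ne_zero M)) ⟨c, hc⟩
      have hu2 : ((u : ZMod p)) * u + 1 = 0 := by
        have := (ZMod.intCast_zmod_eq_zero_iff_dvd (u * u + 1) p).mpr hpd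
        push_cast at this
        exact this
      have hune : (u : ZMod p) ≠ 0 := by
        intro h
        rw [h] at hu2
        simp at hu2
      have h2u : (2 * (u : ZMod p)) ≠ 0 := mul_ne_zero h2ne hune
      set t : ℕ := ((-(c : ZMod p)) * (2 * (u : ZMod p))⁻¹).val with ht
      have htc : ((t : ℕ) : ZMod p) = (-(c : ZMod p)) * (2 * (u : ZMod p))⁻¹ := by
        rw [ht, ZMod.natCast_val, ZMod.cast_id]
      have key : (p : ℤ) ∣ c + 2 * u * (t : ℤ) := by
        rw [← ZMod.intCast_zmod_eq_zero_iff_dvd]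
        push_cast
        rw [htc]
        field_simp
        ring
      obtain ⟨d, hd⟩ := key
      refine ⟨u + (t : ℤ) * (p : ℤ) ^ (M + 1), d + (t : ℤ) * (t : ℤ) * (p : ℤ) ^ M, ?_⟩
      simp only [pow_succ] at hc ⊢
      linear_combination hc + ((p : ℤ) ^ M * (p : ℤ)) * hd

/-- For a prime `p ≡ 1 (mod 4)` and a finite abelian `p`-group `D`, every
nondegenerate symmetric biadditive form `b : D × D → ℚ/ℤ` is a bilinear T-form:
`(D,b)` is isomorphic to `(D,-b)`. -/
theorem form_on_p_group_one_mod_four_is_T_form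
    {p : ℕ} (hp : p.Prime) (hmod : p % 4 = 1)
    {D : Type*} [AddCommGroup D] [Fintype D]
    (hD : ∀ x : D, ∃ k : ℕ, p ^ k • x = 0)
    (b : D → D → AddCircle (1:ℚ))
    (hsymm : ∀ x y : D, b x y = b y x)
    (hadd : ∀ x y z : D, b (x + y) z = b x z + b y z)
    (hnd : ∀ x : D, (∀ y : D, b x y = 0) → x = 0) :
    ∃ f : D ≃+ D, ∀ x y : D, b (f x) (f y) = - b x y := by
  classical
  -- a uniform exponent
  set N : ℕ := Finset.univ.sup fun x : D => (hD x).choose with hNdef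
  have hN : ∀ x : D, p ^ N • x = 0 := by
    intro x
    have hle : (hD x).choose ≤ N := Finset.le_sup (f := fun x : D => (hD x).choose) (Finset.mem_univ x)
    have := (hD x).choose_spec
    calc p ^ N • x = p ^ (N - (hD x).choose) • (p ^ (hD x).choose • x) := by
          rw [← mul_smul, ← pow_add, Nat.sub_add_cancel hle]
      _ = 0 := by rw [this, smul_zero]
  obtain ⟨u, c, hc⟩ := exists_sqrt_neg_one_mod_prime_pow hp hmod N
  -- the form as additive hom in the first variable
  let F : D → D →+ AddCircle (1:ℚ) := fun y =>
    AddMonoidHom.mk' (fun x => b x y) (fun a a' => hadd a a' y)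
  have hz : ∀ (n : ℤ) (x y : D), b (n • x) y = n • b x y := by
    intro n x y
    exact map_zsmul (F y) n x
  have hzero : ∀ y : D, b 0 y = 0 := fun y => (F y).map_zero
  -- key cancellation
  have hxkill : ∀ x : D, (u * u + 1) • x = 0 := by
    intro x
    rw [hc, mul_comm, mul_smul]
    have : ((p : ℤ) ^ N) • x = 0 := by
      have := hN x
      rw [show ((p : ℤ) ^ N) = ((p ^ N : ℕ) : ℤ) by push_cast; ring, natCast_zsmul, this]
    rw [this, smul_zero]
  have key : ∀ x y : D, b (u • x) (u • y) = - b x y := by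
    intro x y
    have h1 : b (u • x) (u • y) = (u * u) • b x y := by
      rw [hz, hsymm, hz, hsymm, smul_smul]
    have h2 : (u * u + 1) • b x y = 0 := by
      rw [← hz, hxkill, hzero]
    rw [h1]
    have : (u * u) • b x y = (u * u + 1) • b x y - (1 : ℤ) • b x y := by
      rw [← sub_smul]
      congr 1
      ring
    rw [this, h2]
    simp
  -- multiplication by u is an automorphism
  have hcop : ∃ a e : ℤ, a * u + e * (p : ℤ) ^ N = 1 := ⟨-u, c, by linarith [hc]⟩
  obtain ⟨a, e, hae⟩ := hcop
  have hinj : Function.Injective (fun x : D => u • x) := by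
    intro x y hxy
    have hx : ∀ z : D, a • (u • z) = z := by
      intro z
      have hpz : ((p : ℤ) ^ N) • z = 0 := by
        have := hN z
        rw [show ((p : ℤ) ^ N) = ((p ^ N : ℕ) : ℤ) by push_cast; ring, natCast_zsmul, this]
      calc a • (u • z) = (a * u) • z := by rw [mul_smul]
        _ = (a * u) • z + e • (((p : ℤ) ^ N) • z) := by rw [hpz, smul_zero, add_zero]
        _ = (a * u + e * (p : ℤ) ^ N) • z := by rw [add_smul, mul_smul, mul_smul]
        _ = z := by rw [hae, one_smul]
    simp only at hxy
    rw [← hx x, ← hx y, hxy]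
  have hbij : Function.Bijective (fun x : D => u • x) :=
    Finite.injective_iff_bijective.mp hinj
  let g : D →+ D := AddMonoidHom.mk' (fun x => u • x) (fun x y => smul_add u x y)
  refine ⟨AddEquiv.ofBijective g hbij, ?_⟩
  intro x y
  exact key x y
end

section
/- For every integer r ≥ 1, the finite bilinear form on (ℤ/2^r)^4 given by b(x,y) = (x₁y₁ + x₂y₂ + x₃y₃ + x₄y₄)/2^r mod ℤ (computed via any integer representatives) is a bilinear T-form: it is isomorphic to its negation. -/
open scoped BigOperators

/-- The diagonal form `b(x,y) = (x₁y₁ + x₂y₂ + x₃y₃ + x₄y₄)/m mod ℤ` on `(ℤ/m)⁴`,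
computed via the canonical integer representatives. -/
noncomputable def diagFormFour (m : ℕ) (x y : Fin 4 → ZMod m) : AddCircle (1:ℚ) :=
  ((((∑ i : Fin 4, ((x i).val * (y i).val : ℤ)) : ℚ) / (m : ℚ) : ℚ) : AddCircle (1:ℚ))

section quat
variable {R : Type*} [CommRing R]

def quatMap (a b c d : R) (x : Fin 4 → R) : Fin 4 → R :=
  ![a*x 0 - b*x 1 - c*x 2 - d*x 3,
    b*x 0 + a*x 1 - d*x 2 + c*x 3,
    c*x 0 + d*x 1 + a*x 2 - b*x 3,
    d*x 0 - c*x 1 + b*x 2 + a*x 3]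

def quatInv (a b c d : R) (y : Fin 4 → R) : Fin 4 → R :=
  ![-a*y 0 - b*y 1 - c*y 2 - d*y 3,
    b*y 0 - a*y 1 - d*y 2 + c*y 3,
    c*y 0 + d*y 1 - a*y 2 - b*y 3,
    d*y 0 - c*y 1 + b*y 2 - a*y 3]

lemma quat_left_inv (a b c d : R) (h : a^2+b^2+c^2+d^2 = -1) (x : Fin 4 → R) :
    quatInv a b c d (quatMap a b c d x) = x := by
  funext i
  fin_cases i <;> simp [quatMap, quatInv] <;>
    first
    | linear_combination (-(x 0))*h
    | linear_combination (-(x 1))*h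
    | linear_combination (-(x 2))*h
    | linear_combination (-(x 3))*h
lemma quat_right_inv (a b c d : R) (h : a^2+b^2+c^2+d^2 = -1) (y : Fin 4 → R) :
    quatMap a b c d (quatInv a b c d y) = y := by
  funext i
  fin_cases i <;> simp [quatMap, quatInv] <;>
    first
    | linear_combination (-(y 0))*h
    | linear_combination (-(y 1))*h
    | linear_combination (-(y 2))*h
    | linear_combination (-(y 3))*h
lemma quat_add (a b c d : R) (x y : Fin 4 → R) :
    quatMap a b c d (x + y) = quatMap a b c d x + quatMap a b c d y := by
  funext i
  fin_cases i <;> simp [quatMap] <;> ring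
lemma quat_sum (a b c d : R) (h : a^2+b^2+c^2+d^2 = -1) (x y : Fin 4 → R) :
    ∑ i : Fin 4, quatMap a b c d x i * quatMap a b c d y i
      = - ∑ i : Fin 4, x i * y i := by
  simp [quatMap, Fin.sum_univ_four]
  linear_combination (x 0 * y 0 + x 1 * y 1 + x 2 * y 2 + x 3 * y 3) * h
end quat

lemma diagFormFour_neg (n : ℕ) [NeZero n] (u v x y : Fin 4 → ZMod n)
    (hsum : ∑ i : Fin 4, u i * v i = - ∑ i : Fin 4, x i * y i) :
    diagFormFour n u v = - diagFormFour n x y := by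
  set s : ℤ := ∑ i : Fin 4, ((u i).val * (v i).val : ℤ) with hs
  set t : ℤ := ∑ i : Fin 4, ((x i).val * (y i).val : ℤ) with ht
  have hz : ((s + t : ℤ) : ZMod n) = 0 := by
    push_cast [hs, ht]
    simp only [ZMod.natCast_val, ZMod.cast_id', id_eq]
    rw [hsum]; ring
  obtain ⟨k, hk⟩ := (ZMod.intCast_zmod_eq_zero_iff_dvd _ _).mp hz
  have hn : (n : ℚ) ≠ 0 := Nat.cast_ne_zero.mpr (NeZero.ne n)
  have hq : (s : ℚ) / n + (t : ℚ) / n = (k : ℚ) := by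
    rw [← add_div,
      show ((s : ℚ) + t) = (n : ℚ) * k from by exact_mod_cast hk,
      mul_comm, mul_div_assoc, div_self hn, mul_one]
  have hsq : ((s : ℚ)) = ∑ i : Fin 4, ((((u i).val * (v i).val : ℤ)) : ℚ) := by
    rw [hs]; push_cast; ring
  have htq : ((t : ℚ)) = ∑ i : Fin 4, ((((x i).val * (y i).val : ℤ)) : ℚ) := by
    rw [ht]; push_cast; ring
  rw [eq_neg_iff_add_eq_zero, diagFormFour, diagFormFour, ← hsq, ← htq, ← AddCircle.coe_add, hq,
    AddCircle.coe_eq_zero_iff]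
  exact ⟨k, by simp⟩

/-- For every `r ≥ 1`, the form `(x₁y₁+x₂y₂+x₃y₃+x₄y₄)/2^r` on `(ℤ/2^r)⁴` is a
bilinear T-form: it is isomorphic to its negation. -/
theorem fourA2r_is_T_form (r : ℕ) (hr : 1 ≤ r) :
    ∃ f : (Fin 4 → ZMod (2 ^ r)) ≃+ (Fin 4 → ZMod (2 ^ r)),
      ∀ x y : Fin 4 → ZMod (2 ^ r),
        diagFormFour (2 ^ r) (f x) (f y) = - diagFormFour (2 ^ r) x y := by
  haveI : NeZero (2 ^ r) := ⟨pow_ne_zero r two_ne_zero⟩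
  obtain ⟨a, b, c, d, habcd⟩ := Nat.sum_four_squares (2 ^ r - 1)
  have h : (a : ZMod (2 ^ r))^2 + (b : ZMod (2 ^ r))^2 + (c : ZMod (2 ^ r))^2
      + (d : ZMod (2 ^ r))^2 = -1 := by
    have h1 : ((a^2 + b^2 + c^2 + d^2 : ℕ) : ZMod (2 ^ r)) = ((2 ^ r - 1 : ℕ) : ZMod (2 ^ r)) := by
      rw [habcd]
    have h2 : ((2 ^ r - 1 : ℕ) : ZMod (2 ^ r)) + 1 = 0 := by
      have h3 : (2 ^ r - 1) + 1 = 2 ^ r := Nat.sub_add_cancel (Nat.one_le_pow r 2 (by norm_num))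
      calc ((2 ^ r - 1 : ℕ) : ZMod (2 ^ r)) + 1
          = (((2 ^ r - 1) + 1 : ℕ) : ZMod (2 ^ r)) := by push_cast; ring
        _ = ((2 ^ r : ℕ) : ZMod (2 ^ r)) := by rw [h3]
        _ = 0 := ZMod.natCast_self _
    push_cast at h1
    rw [h1]
    linear_combination h2
  refine ⟨{ toFun := quatMap (a : ZMod (2 ^ r)) b c d,
            invFun := quatInv (a : ZMod (2 ^ r)) b c d,
            left_inv := quat_left_inv _ _ _ _ h,
            right_inv := quat_right_inv _ _ _ _ h,
            map_add' := quat_add _ _ _ _ }, ?_⟩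
  intro x y
  exact diagFormFour_neg _ _ _ _ _ (quat_sum _ _ _ _ h x y)
end

section
/- Let (D,b) be a bilinear T-form and let σ ∈ {0,4}. Suppose q and q' are quadratic forms on D, each refining b (i.e. q(x+y) − q(x) − q(y) = b(x,y) for all x,y, and likewise for q'), each a quadratic T-form, and with nonzero first Gauss sums satisfying τ₁(q)/|τ₁(q)| = τ₁(q')/|τ₁(q')| = exp(2πiσ/8). Then (D,q) and (D,q') are isomorphic: there is a group automorphism f of D with q'(f(x)) = q(x) for all x ∈ D. -/
open scoped BigOperators

instance : Fact ((0:ℚ) < 1) := ⟨one_pos⟩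

/-- The well-defined map `ℚ/ℤ → ℂ` induced by `a ↦ exp(2πi a)`, computed via the
canonical representative in `[0,1)`. -/
noncomputable def stdAddChar (x : AddCircle (1 : ℚ)) : ℂ :=
  Complex.exp (2 * Real.pi * Complex.I * (((AddCircle.equivIco (1:ℚ) 0 x : ℚ)) : ℂ))

/-- The `n`-th Gauss sum `τ_n(q) = Σ_{x ∈ D} e(n·q(x))`. -/
noncomputable def qGaussSum {D : Type*} (q : D → AddCircle (1:ℚ)) (n : ℤ) : ℂ :=
  ∑ᶠ x : D, stdAddChar (n • q x)

section StdAux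

noncomputable def stdRep (x : AddCircle (1:ℚ)) : ℚ := (AddCircle.equivIco (1:ℚ) 0 x : ℚ)

lemma coe_rep (x : AddCircle (1:ℚ)) : ((stdRep x : ℚ) : AddCircle (1:ℚ)) = x :=
  (AddCircle.equivIco (1:ℚ) 0).symm_apply_apply x

lemma rep_mem (x : AddCircle (1:ℚ)) : stdRep x ∈ Set.Ico (0:ℚ) 1 := by
  have h := (AddCircle.equivIco (1:ℚ) 0 x).2
  simpa [stdRep] using h

lemma stdExists_int_of_coe_eq {x y : ℚ} (h : ((x : ℚ) : AddCircle (1:ℚ)) = (y : ℚ)) :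
    ∃ k : ℤ, x - y = k := by
  have h' := QuotientAddGroup.eq_iff_sub_mem.mp h
  obtain ⟨k, hk⟩ := AddSubgroup.mem_zmultiples_iff.mp h'
  exact ⟨k, by rw [← hk]; simp⟩

lemma stdExp_eq_of_int_diff {x y : ℚ} (h : ∃ k : ℤ, x - y = k) :
    Complex.exp (2 * Real.pi * Complex.I * (x:ℂ)) = Complex.exp (2 * Real.pi * Complex.I * (y:ℂ)) := by
  obtain ⟨k, hk⟩ := h
  have : (x : ℂ) = (y : ℂ) + (k : ℂ) := by
    have : (x : ℚ) = y + k := by linarith [hk]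
    exact_mod_cast congrArg (fun t : ℚ => (t : ℂ)) this
  rw [this, mul_add, Complex.exp_add]
  have : Complex.exp (2 * Real.pi * Complex.I * (k:ℂ)) = 1 := by
    have := Complex.exp_int_mul_two_pi_mul_I k
    rw [← this]; ring_nf
  rw [this, mul_one]

lemma stdAddChar_coe (r : ℚ) :
    stdAddChar ((r : ℚ) : AddCircle (1:ℚ)) = Complex.exp (2 * Real.pi * Complex.I * (r:ℂ)) := by
  apply stdExp_eq_of_int_diff
  apply stdExists_int_of_coe_eq
  exact coe_rep _

lemma stdAddChar_coe_add (a c : ℚ) :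
    stdAddChar (((a:ℚ):AddCircle (1:ℚ)) + (c:ℚ)) = stdAddChar (a:ℚ) * stdAddChar (c:ℚ) := by
  have h : ((a:ℚ):AddCircle (1:ℚ)) + (c:ℚ) = (((a+c:ℚ)):AddCircle (1:ℚ)) := rfl
  rw [h, stdAddChar_coe, stdAddChar_coe, stdAddChar_coe, ← Complex.exp_add]
  push_cast
  ring_nf

lemma stdAddChar_add (x y : AddCircle (1:ℚ)) :
    stdAddChar (x + y) = stdAddChar x * stdAddChar y := by
  rw [← coe_rep x, ← coe_rep y]
  exact stdAddChar_coe_add _ _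

lemma stdAddChar_zero : stdAddChar (0 : AddCircle (1:ℚ)) = 1 := by
  have : ((0:ℚ) : AddCircle (1:ℚ)) = 0 := by simp
  rw [← this, stdAddChar_coe]; simp

lemma stdAddChar_injective : Function.Injective stdAddChar := by
  intro x y h
  rw [← coe_rep x, ← coe_rep y, stdAddChar_coe, stdAddChar_coe] at h
  rw [Complex.exp_eq_exp_iff_exists_int] at h
  obtain ⟨n, hn⟩ := h
  have hpi : (2 * Real.pi * Complex.I) ≠ 0 := by
    simp [Real.pi_ne_zero, Complex.I_ne_zero]
  have hn' : (stdRep x : ℂ) = (stdRep y : ℂ) + n := by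
    have : 2 * Real.pi * Complex.I * (stdRep x : ℂ)
        = 2 * Real.pi * Complex.I * ((stdRep y : ℂ) + n) := by
      rw [hn]; ring
    exact mul_left_cancel₀ hpi this
  have hq : stdRep x = stdRep y + n := by exact_mod_cast hn'
  have hx := rep_mem x; have hy := rep_mem y
  have : n = 0 := by
    rcases hx with ⟨hx0, hx1⟩; rcases hy with ⟨hy0, hy1⟩
    have h1 : (n:ℚ) < 1 := by linarith
    have h2 : (-1:ℚ) < n := by linarith
    have : n < 1 := by exact_mod_cast h1
    have : (-1:ℤ) < n := by exact_mod_cast h2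
    omega
  rw [← coe_rep x, ← coe_rep y, hq, this]; simp

lemma stdAddChar_abs (x : AddCircle (1:ℚ)) : ‖stdAddChar x‖ = 1 := by
  rw [← coe_rep x, stdAddChar_coe, Complex.norm_exp]
  have : (2 * Real.pi * Complex.I * ((stdRep x : ℚ):ℂ)).re = 0 := by
    simp [Complex.mul_re, Complex.mul_im]
  rw [this, Real.exp_zero]



noncomputable def stdToAddChar {D : Type*} [AddCommGroup D] (φ : D →+ AddCircle (1:ℚ)) :
    AddChar D ℂ where
  toFun a := stdAddChar (φ a)
  map_zero_eq_one' := by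
    show stdAddChar (φ 0) = 1
    rw [map_zero, stdAddChar_zero]
  map_add_eq_mul' a b := by
    show stdAddChar (φ (a + b)) = stdAddChar (φ a) * stdAddChar (φ b)
    rw [map_add, stdAddChar_add]

lemma toAddChar_injective {D : Type*} [AddCommGroup D] :
    Function.Injective (stdToAddChar (D := D)) := by
  intro φ ψ h
  ext a
  exact stdAddChar_injective (DFunLike.congr_fun h a)

lemma bform_exists_dual {D : Type*} [AddCommGroup D] [Fintype D]
    (b : D → D → AddCircle (1:ℚ))
    (hsymm : ∀ x y : D, b x y = b y x)
    (hadd : ∀ x y z : D, b (x + y) z = b x z + b y z)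
    (hnd : ∀ x : D, (∀ y : D, b x y = 0) → x = 0)
    (l : D →+ AddCircle (1:ℚ)) : ∃ c : D, ∀ x, b c x = l x := by
  classical
  let Φ : D → (D →+ AddCircle (1:ℚ)) := fun c => AddMonoidHom.mk' (fun x => b c x)
    (fun x y => by
      show b c (x + y) = b c x + b c y
      rw [hsymm c (x+y), hadd, hsymm x c, hsymm y c])
  have hΦx : ∀ c x, Φ c x = b c x := fun c x => rfl
  have hΦinj : Function.Injective Φ := by
    intro c c' h
    have h0 : ∀ x, b (c - c') x = 0 := by
      intro x
      have h1 : b c x = b c' x := by rw [← hΦx, ← hΦx, h]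
      have h2 : b (c - c' + c') x = b (c - c') x + b c' x := hadd _ _ _
      rw [sub_add_cancel, h1] at h2
      have h3 : (0 : AddCircle (1:ℚ)) + b c' x = b (c - c') x + b c' x := by
        rw [zero_add]; exact h2
      exact (add_right_cancel h3).symm
    have := hnd _ h0
    exact sub_eq_zero.mp this
  have hfin : Finite (D →+ AddCircle (1:ℚ)) := Finite.of_injective _ toAddChar_injective
  letI : Fintype (D →+ AddCircle (1:ℚ)) := Fintype.ofFinite _
  have hcard : Fintype.card (D →+ AddCircle (1:ℚ)) = Fintype.card D := by
    refine le_antisymm ?_ (Fintype.card_le_of_injective Φ hΦinj)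
    calc Fintype.card (D →+ AddCircle (1:ℚ))
        ≤ Fintype.card (AddChar D ℂ) := Fintype.card_le_of_injective _ toAddChar_injective
      _ = Fintype.card D := AddChar.card_eq
  have hbij : Function.Bijective Φ :=
    (Fintype.bijective_iff_injective_and_card Φ).mpr ⟨hΦinj, hcard.symm⟩
  obtain ⟨c, hc⟩ := hbij.2 l
  exact ⟨c, fun x => by rw [← hΦx, hc]⟩

lemma stdAddChar_of_two_torsion {a : AddCircle (1:ℚ)} (h2 : a + a = 0) (h : a ≠ 0) :
    stdAddChar a = -1 := by
  have hsq : stdAddChar a * stdAddChar a = 1 := by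
    rw [← stdAddChar_add, h2, stdAddChar_zero]
  rcases mul_self_eq_one_iff.mp hsq with h1 | h1
  · exact absurd (stdAddChar_injective (h1.trans stdAddChar_zero.symm)) h
  · exact h1

lemma addCircle_two_torsion_unique {a a' : AddCircle (1:ℚ)} (ha2 : a + a = 0) (ha'2 : a' + a' = 0)
    (ha : a ≠ 0) (ha' : a' ≠ 0) : a = a' :=
  stdAddChar_injective (by
    rw [stdAddChar_of_two_torsion ha2 ha, stdAddChar_of_two_torsion ha'2 ha'])


end StdAux

/-- Let `(D,b)` be a bilinear T-form and `σ ∈ {0,4}`.  Two quadratic T-forms refining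
`b` whose (nonzero) first Gauss sums both have phase `exp(2πiσ/8)` are isomorphic. -/
theorem T_quadratic_refinement_unique
    {D : Type*} [AddCommGroup D] [Fintype D]
    (b : D → D → AddCircle (1:ℚ))
    (hsymm : ∀ x y : D, b x y = b y x)
    (hadd : ∀ x y z : D, b (x + y) z = b x z + b y z)
    (hnd : ∀ x : D, (∀ y : D, b x y = 0) → x = 0)
    (hT : ∃ f : D ≃+ D, ∀ x y : D, b (f x) (f y) = - b x y)
    (σ : ℕ) (hσ : σ = 0 ∨ σ = 4)
    (q q' : D → AddCircle (1:ℚ))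
    (hq : ∀ (n : ℤ) (x : D), q (n • x) = n ^ 2 • q x)
    (hq' : ∀ (n : ℤ) (x : D), q' (n • x) = n ^ 2 • q' x)
    (hqb : ∀ x y : D, q (x + y) - q x - q y = b x y)
    (hqb' : ∀ x y : D, q' (x + y) - q' x - q' y = b x y)
    (hqT : ∃ γ : D ≃+ D, ∀ x : D, q (γ x) = - q x)
    (hqT' : ∃ γ : D ≃+ D, ∀ x : D, q' (γ x) = - q' x)
    (hτ : qGaussSum q 1 ≠ 0)
    (hτ' : qGaussSum q' 1 ≠ 0)
    (hph : qGaussSum q 1 / ((‖qGaussSum q 1‖ : ℝ) : ℂ) =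
      Complex.exp (2 * Real.pi * Complex.I * σ / 8))
    (hph' : qGaussSum q' 1 / ((‖qGaussSum q' 1‖ : ℝ) : ℂ) =
      Complex.exp (2 * Real.pi * Complex.I * σ / 8)) :
    ∃ f : D ≃+ D, ∀ x : D, q' (f x) = q x := by
  classical
  -- the difference l = q' - q is additive
  let l : D →+ AddCircle (1:ℚ) := AddMonoidHom.mk' (fun x => q' x - q x) (by
    intro x y
    show q' (x + y) - q (x + y) = (q' x - q x) + (q' y - q y)
    have h1 := hqb x y
    have h2 := hqb' x y
    calc q' (x + y) - q (x + y)
        = (q' (x + y) - q' x - q' y) - (q (x + y) - q x - q y)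
          + ((q' x - q x) + (q' y - q y)) := by abel
      _ = (q' x - q x) + (q' y - q y) := by rw [h1, h2, sub_self, zero_add])
  have hlx : ∀ x, l x = q' x - q x := fun x => rfl
  have hq'eq : ∀ x, q' x = q x + l x := by
    intro x
    rw [hlx x]
    abel
  -- 2-torsion
  have hlneg : ∀ x, l (-x) = l x := by
    intro x
    have e1 : ((-1:ℤ) • x) = -x := by simp
    rw [hlx, hlx, ← e1, hq, hq']
    norm_num
  have hl2 : ∀ x, l x + l x = 0 := by
    intro x
    have h1 : l x + l (-x) = 0 := by
      rw [map_neg]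
      exact add_neg_cancel _
    rwa [hlneg x] at h1
  -- dualize
  obtain ⟨c, hc⟩ := bform_exists_dual b hsymm hadd hnd l
  have hcc : c + c = 0 := by
    refine hnd _ fun x => ?_
    rw [hadd, hc]
    exact hl2 x
  have hq0 : q 0 = 0 := by have := hq 0 0; simpa using this
  -- Gauss sums
  have hqsum : ∀ r : D → AddCircle (1:ℚ), qGaussSum r 1 = ∑ x, stdAddChar (r x) := by
    intro r
    rw [qGaussSum, finsum_eq_sum_of_fintype]
    simp
  have hq'x : ∀ x, q' x = q (x + c) + (- q c) := by
    intro x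
    have h1 := hqb x c
    have hbxc : b x c = l x := by rw [hsymm, hc]
    have h3 : q (x + c) = b x c + q x + q c := by rw [← h1]; abel
    rw [hq'eq x, h3, hbxc]
    abel
  have hτ'τ : qGaussSum q' 1 = stdAddChar (- q c) * qGaussSum q 1 := by
    rw [hqsum q', hqsum q]
    calc ∑ x, stdAddChar (q' x)
        = ∑ x, stdAddChar (- q c) * stdAddChar (q (x + c)) := by
          refine Finset.sum_congr rfl fun x _ => ?_
          rw [hq'x x, stdAddChar_add, mul_comm]
      _ = stdAddChar (- q c) * ∑ x, stdAddChar (q (x + c)) := by rw [← Finset.mul_sum]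
      _ = stdAddChar (- q c) * ∑ x, stdAddChar (q x) := by
          congr 1
          exact Fintype.sum_equiv (Equiv.addRight c) _ _ (fun x => rfl)
  -- phase comparison forces q c = 0
  have habs : ‖qGaussSum q' 1‖ = ‖qGaussSum q 1‖ := by
    rw [hτ'τ, norm_mul, stdAddChar_abs, one_mul]
  have hA : ((‖qGaussSum q 1‖ : ℝ) : ℂ) ≠ 0 := by
    simpa using hτ
  rw [div_eq_iff hA] at hph
  rw [habs, div_eq_iff hA] at hph'
  have hE : Complex.exp (2 * Real.pi * Complex.I * σ / 8) ≠ 0 := Complex.exp_ne_zero _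
  have hz1 : stdAddChar (- q c) = 1 := by
    have h4 : stdAddChar (- q c) * qGaussSum q 1 = qGaussSum q 1 := by
      rw [← hτ'τ, hph']
      exact hph.symm
    rcases (mul_left_eq_self₀).mp h4 with h | h
    · exact h
    · exact absurd h hτ
  have hqc : q c = 0 := by
    have := stdAddChar_injective (hz1.trans stdAddChar_zero.symm)
    rwa [neg_eq_zero] at this
  have hlc : l c = 0 := by
    rw [← hc c, ← hqb c c, hcc, hq0, hqc]
    simp
  have hq'c : q' c = 0 := by
    rw [hq'eq c, hqc, hlc, add_zero]
  -- the automorphism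
  set f : D → D := fun x => if l x = 0 then x else x + c with hf
  have hfval : ∀ x, f x = if l x = 0 then x else x + c := fun x => rfl
  have hfadd : ∀ x y, f (x + y) = f x + f y := by
    intro x y
    have hl : l (x + y) = l x + l y := map_add l x y
    by_cases hx : l x = 0 <;> by_cases hy : l y = 0
    · have h0 : l (x + y) = 0 := by rw [hl, hx, hy, add_zero]
      rw [hfval, hfval, hfval, if_pos h0, if_pos hx, if_pos hy]
    · have h0 : l (x + y) ≠ 0 := by rw [hl, hx, zero_add]; exact hy
      rw [hfval, hfval, hfval, if_neg h0, if_pos hx, if_neg hy, add_assoc]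
    · have h0 : l (x + y) ≠ 0 := by rw [hl, hy, add_zero]; exact hx
      rw [hfval, hfval, hfval, if_neg h0, if_neg hx, if_pos hy]
      abel
    · have hxy : l x = l y := addCircle_two_torsion_unique (hl2 x) (hl2 y) hx hy
      have h0 : l (x + y) = 0 := by rw [hl, hxy]; exact hl2 y
      rw [hfval, hfval, hfval, if_pos h0, if_neg hx, if_neg hy]
      have : (x + c) + (y + c) = (x + y) + (c + c) := by abel
      rw [this, hcc, add_zero]
  have hfinv : ∀ x, f (f x) = x := by
    intro x
    by_cases hx : l x = 0
    · have e : f x = x := by rw [hfval x, if_pos hx]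
      rw [e, e]
    · have h1 : l (x + c) ≠ 0 := by
        rw [map_add, hlc, add_zero]; exact hx
      have e : f x = x + c := by rw [hfval x, if_neg hx]
      have e2 : f (x + c) = x + c + c := by rw [hfval (x + c), if_neg h1]
      rw [e, e2, add_assoc, hcc, add_zero]
  refine ⟨AddEquiv.mk' ⟨f, f, hfinv, hfinv⟩ hfadd, ?_⟩
  intro x
  show q' (f x) = q x
  by_cases hx : l x = 0
  · rw [hfval x, if_pos hx]
    have h1 : q' x - q x = 0 := by rw [← hlx x]; exact hx
    have := sub_eq_zero.mp h1
    exact this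
  · rw [hfval x, if_neg hx]
    have h2 := hqb' x c
    have h3 : q' (x + c) = b x c + q' x + q' c := by rw [← h2]; abel
    rw [h3, hq'c, add_zero, hsymm, hc, hq'eq x]
    have h5 : l x + (q x + l x) = q x + (l x + l x) := by abel
    rw [h5, hl2 x, add_zero]
end

section
/- Every nondegenerate symmetric biadditive form b : D × D → ℚ/ℤ on a finite abelian 2-group D is isomorphic to a finite orthogonal direct sum of forms from the following list (all values mod ℤ, via integer representatives): A_{2^r} = (ℤ/2^r, xy/2^r) for r ≥ 1; B_{2^r} = (ℤ/2^r, −xy/2^r) for r ≥ 2; C_{2^r} = (ℤ/2^r, 5xy/2^r) for r ≥ 3; D_{2^r} = (ℤ/2^r, −5xy/2^r) for r ≥ 3; E_{2^r} = ((ℤ/2^r)², (x₁y₂ + x₂y₁)/2^r) for r ≥ 1; and F_{2^r} = ((ℤ/2^r)², (2x₁y₁ + x₁y₂ + x₂y₁ + 2x₂y₂)/2^r) for r ≥ 2. -/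
open scoped BigOperators

/-- The cyclic form `b(x,y) = a·x·y/m mod ℤ` on `ℤ/m`, computed via the canonical
integer representatives. -/
noncomputable def cycForm (m : ℕ) (a : ℤ) (x y : ZMod m) : AddCircle (1:ℚ) :=
  ((((a * (x.val : ℤ) * (y.val : ℤ) : ℤ) : ℚ) / (m : ℚ) : ℚ) : AddCircle (1:ℚ))

/-- The rank-two form `b(x,y) = (c₁₁x₁y₁ + c₁₂(x₁y₂+x₂y₁) + c₂₂x₂y₂)/m mod ℤ` on
`(ℤ/m)²`, computed via the canonical integer representatives.  For `(c₁₁,c₁₂,c₂₂) =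
(0,1,0)` it is `E_m`, for `(2,1,2)` it is `F_m`. -/
noncomputable def rankTwoForm (m : ℕ) (c : ℤ × ℤ × ℤ) (x y : ZMod m × ZMod m) :
    AddCircle (1:ℚ) :=
  ((((c.1 * (x.1.val : ℤ) * (y.1.val : ℤ) +
      c.2.1 * ((x.1.val : ℤ) * (y.2.val : ℤ) + (x.2.val : ℤ) * (y.1.val : ℤ)) +
      c.2.2 * (x.2.val : ℤ) * (y.2.val : ℤ) : ℤ) : ℚ) / (m : ℚ) : ℚ) : AddCircle (1:ℚ))

noncomputable def qz (t : ℤ) (n : ℕ) : AddCircle (1:ℚ) :=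
  (((t : ℚ) / (n : ℚ) : ℚ) : AddCircle (1:ℚ))

lemma cycForm_eq_qz (m : ℕ) (a : ℤ) (x y : ZMod m) :
    cycForm m a x y = qz (a * (x.val : ℤ) * (y.val : ℤ)) m := rfl

lemma rankTwoForm_eq_qz (m : ℕ) (c : ℤ × ℤ × ℤ) (x y : ZMod m × ZMod m) :
    rankTwoForm m c x y = qz (c.1 * (x.1.val : ℤ) * (y.1.val : ℤ) +
      c.2.1 * ((x.1.val : ℤ) * (y.2.val : ℤ) + (x.2.val : ℤ) * (y.1.val : ℤ)) +
      c.2.2 * (x.2.val : ℤ) * (y.2.val : ℤ)) m := rfl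

lemma qz_add (s t : ℤ) (n : ℕ) : qz s n + qz t n = qz (s + t) n := by
  unfold qz
  rw [← AddCircle.coe_add]
  norm_num [add_div]

lemma qz_zero (n : ℕ) : qz 0 n = 0 := by
  unfold qz; norm_num

lemma qz_zsmul (m : ℤ) (t : ℤ) (n : ℕ) : m • qz t n = qz (m * t) n := by
  unfold qz
  rw [← QuotientAddGroup.mk_zsmul]
  congr 1
  rw [zsmul_eq_mul]
  push_cast
  ring

lemma qz_nsmul (m : ℕ) (t : ℤ) (n : ℕ) : m • qz t n = qz (m * t) n := by
  rw [← natCast_zsmul, qz_zsmul]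

lemma qz_neg (t : ℤ) (n : ℕ) : -qz t n = qz (-t) n := by
  have := qz_zsmul (-1) t n; simpa using this

lemma qz_eq_zero_iff {n : ℕ} (hn : n ≠ 0) (t : ℤ) : qz t n = 0 ↔ (n : ℤ) ∣ t := by
  unfold qz
  rw [AddCircle.coe_eq_zero_iff]
  constructor
  · rintro ⟨z, hz⟩
    refine ⟨z, ?_⟩
    have hn' : (n : ℚ) ≠ 0 := by exact_mod_cast hn
    have : (t : ℚ) = n * z := by
      field_simp at hz
      rw [← hz]; push_cast; ring
    exact_mod_cast this
  · rintro ⟨z, hz⟩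
    refine ⟨z, ?_⟩
    have hn' : (n : ℚ) ≠ 0 := by exact_mod_cast hn
    rw [hz]
    push_cast
    field_simp
    rw [zsmul_eq_mul, mul_one]

lemma qz_eq_of_dvd {n : ℕ} (hn : n ≠ 0) {s t : ℤ} (h : (n : ℤ) ∣ s - t) :
    qz s n = qz t n := by
  have h0 : qz (s - t) n = 0 := (qz_eq_zero_iff hn _).2 h
  have h2 := qz_add (s - t) t n
  rw [h0, zero_add, sub_add_cancel] at h2
  exact h2.symm

lemma exists_qz {n : ℕ} (hn : n ≠ 0) {c : AddCircle (1:ℚ)} (h : n • c = 0) :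
    ∃ t : ℤ, c = qz t n := by
  obtain ⟨q, rfl⟩ := QuotientAddGroup.mk_surjective c
  have hq : ((n • q : ℚ) : AddCircle (1:ℚ)) = 0 := by
    rw [QuotientAddGroup.mk_nsmul]; exact h
  rw [AddCircle.coe_eq_zero_iff] at hq
  obtain ⟨z, hz⟩ := hq
  refine ⟨z, ?_⟩
  unfold qz
  congr 1
  have hn' : (n : ℚ) ≠ 0 := by exact_mod_cast hn
  field_simp
  rw [zsmul_eq_mul, nsmul_eq_mul, mul_one] at hz
  rw [hz]; ring



lemma odd_inv (a : ℤ) (ha : a % 2 = 1) : ∀ N : ℕ, ∃ a' : ℤ, a' % 2 = 1 ∧ (2^N : ℤ) ∣ a * a' - 1 := by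
  intro N
  induction N with
  | zero => exact ⟨1, rfl, by norm_num⟩
  | succ N ih =>
    rcases Nat.eq_zero_or_pos N with hN | hN
    · subst hN
      exact ⟨1, rfl, by simpa using Int.dvd_of_emod_eq_zero (by omega : (a * 1 - 1) % 2 = 0)⟩
    obtain ⟨a', ha', ⟨m, hm⟩⟩ := ih
    have haa' : a * a' % 2 = 1 := by
      have := Int.mul_emod a a' 2
      rw [ha, ha'] at this; omega
    refine ⟨a' * (2 - a * a'), ?_, ?_⟩
    · have h2 : (2 - a * a') % 2 = 1 := by omega
      have := Int.mul_emod a' (2 - a * a') 2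
      rw [ha', h2] at this; omega
    · have key : a * (a' * (2 - a * a')) - 1 = -((2^N * m)^2) := by
        rw [← hm]; ring
      rw [key]
      refine dvd_neg.mpr ?_
      have h3 : ((2:ℤ)^N)^2 = 2^(N*2) := (pow_mul 2 N 2).symm
      have h4 : (2^(N+1) : ℤ) ∣ 2^(N*2) := pow_dvd_pow 2 (by omega)
      have : ((2:ℤ)^N * m)^2 = 2^(N*2) * m^2 := by rw [← h3]; ring
      rw [this]
      exact dvd_mul_of_dvd_left h4 _

lemma hensel_quad (A B C : ℤ) (hB : B % 2 = 1)
    (h0 : ∃ c : ℤ, (2:ℤ) ∣ A * c^2 + B * c + C) :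
    ∀ N : ℕ, ∃ c : ℤ, (2^N : ℤ) ∣ A * c^2 + B * c + C := by
  intro N
  induction N with
  | zero => exact ⟨0, by norm_num⟩
  | succ N ih =>
    rcases Nat.eq_zero_or_pos N with hN | hN
    · subst hN; simpa using h0
    obtain ⟨c, m, hm⟩ := ih
    refine ⟨c + 2^N * m, ?_⟩
    have key : A * (c + 2^N * m)^2 + B * (c + 2^N * m) + C
        = (A * c^2 + B * c + C) + 2^N * (m * (2 * A * c + B + 1)) - 2^N * m + ((2^N)^2) * (A * m^2) := by
      ring
    rw [key, hm]
    obtain ⟨k, hk⟩ : ∃ k, B = 2*k+1 := ⟨B/2, by omega⟩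
    have h1 : (2^(N+1) : ℤ) ∣ 2^N * (m * (2 * A * c + B + 1)) := by
      rw [pow_succ]
      have h2 : (2:ℤ) ∣ 2 * A * c + B + 1 := ⟨A * c + k + 1, by rw [hk]; ring⟩
      obtain ⟨w, hw⟩ := h2
      exact ⟨m * w, by rw [hw]; ring⟩
    have h3 : (2^(N+1) : ℤ) ∣ ((2:ℤ)^N)^2 * (A * m^2) := by
      refine dvd_mul_of_dvd_left ?_ _
      rw [← pow_mul]
      exact pow_dvd_pow 2 (by omega)
    have h4 : (2:ℤ)^N * m + 2^N * (m * (2 * A * c + B + 1)) - 2^N * m + ((2:ℤ)^N)^2 * (A * m^2)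
        = (2^N * (m * (2 * A * c + B + 1)) + ((2:ℤ)^N)^2 * (A * m^2)) := by ring
    rw [h4]
    exact dvd_add h1 h3

lemma sq_lift (t : ℤ) (ht : (8:ℤ) ∣ t - 1) :
    ∀ N : ℕ, ∃ u : ℤ, u % 2 = 1 ∧ (2^N : ℤ) ∣ u^2 - t := by
  intro N
  induction N with
  | zero => exact ⟨1, rfl, by norm_num⟩
  | succ N ih =>
    rcases Nat.lt_or_ge N 3 with hN | hN
    · refine ⟨1, rfl, ?_⟩
      have h1 : (2^(N+1) : ℤ) ∣ 2^3 := pow_dvd_pow 2 (by omega)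
      refine h1.trans ?_
      have h2 : (1:ℤ)^2 - t = -(t - 1) := by ring
      rw [h2]
      exact (by norm_num : (2:ℤ)^3 = 8) ▸ ht.neg_right
    obtain ⟨u, hu, m, hm⟩ := ih
    have hN1 : N - 1 + 1 = N := by omega
    refine ⟨u + 2^(N-1) * m, ?_, ?_⟩
    · have h1 : (2:ℤ) ∣ 2^(N-1) := dvd_pow_self 2 (by omega)
      obtain ⟨w, hw⟩ := h1
      have : u + 2^(N-1) * m = u + 2 * (w * m) := by rw [hw]; ring
      omega
    · have h2N : (2:ℤ)^(N-1) * 2 = 2^N := by rw [← pow_succ, hN1]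
      have key : (u + 2^(N-1) * m)^2 - t
          = (u^2 - t) + (2^(N-1) * 2) * (m * u) + ((2:ℤ)^(N-1))^2 * m^2 := by
        ring
      rw [key, h2N, hm]
      obtain ⟨k, hk⟩ : ∃ k, u = 2*k+1 := ⟨u/2, by omega⟩
      have h1 : (2^(N+1) : ℤ) ∣ 2^N * m + 2^N * (m * u) := by
        have h5 : 2^N * m + 2^N * (m * u) = 2^N * (2 * (m * (k + 1))) := by rw [hk]; ring
        rw [h5, pow_succ]
        exact ⟨m * (k+1), by ring⟩
      have h3 : (2^(N+1) : ℤ) ∣ ((2:ℤ)^(N-1))^2 * m^2 := by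
        refine dvd_mul_of_dvd_left ?_ _
        rw [← pow_mul]
        exact pow_dvd_pow 2 (by omega)
      have h4 : (2:ℤ)^N * m + 2^N * (m * u) + ((2:ℤ)^(N-1))^2 * m^2
          = (2^N * m + 2^N * (m * u)) + ((2:ℤ)^(N-1))^2 * m^2 := by ring
      rw [h4]
      exact dvd_add h1 h3


lemma unit_class (a : ℤ) (ha : a % 2 = 1) (r : ℕ) (hr : 1 ≤ r) :
    ∃ u ε : ℤ, u % 2 = 1 ∧
      ((ε = 1 ∧ 1 ≤ r) ∨ (ε = -1 ∧ 2 ≤ r) ∨ (ε = 5 ∧ 3 ≤ r) ∨ (ε = -5 ∧ 3 ≤ r)) ∧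
      (2^r : ℤ) ∣ u^2 * a - ε := by
  rcases Nat.lt_or_ge r 3 with hr3 | hr3
  · interval_cases r
    · rcases (by omega : a % 2 = 1) with h
      exact ⟨1, 1, rfl, Or.inl ⟨rfl, le_refl 1⟩, by
        simpa using Int.dvd_of_emod_eq_zero (by omega : (1^2 * a - 1) % 2 = 0)⟩
    · have h4 : a % 4 = 1 ∨ a % 4 = 3 := by omega
      rcases h4 with h4 | h4
      · exact ⟨1, 1, rfl, Or.inl ⟨rfl, by omega⟩, by
          have : ((1:ℤ)^2 * a - 1) % 4 = 0 := by omega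
          simpa using Int.dvd_of_emod_eq_zero this⟩
      · exact ⟨1, -1, rfl, Or.inr (Or.inl ⟨rfl, by omega⟩), by
          have : ((1:ℤ)^2 * a - (-1)) % 4 = 0 := by omega
          simpa using Int.dvd_of_emod_eq_zero this⟩
  · -- r ≥ 3
    obtain ⟨a', ha', hinv⟩ := odd_inv a ha r
    have h8inv : (8:ℤ) ∣ a * a' - 1 := by
      have : (8:ℤ) ∣ (2^r : ℤ) := by
        have := pow_dvd_pow (2:ℤ) hr3
        simpa using this
      exact this.trans hinv
    have hsq : (8:ℤ) ∣ a^2 - 1 := by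
      obtain ⟨k, hk⟩ : ∃ k, a = 2*k+1 := ⟨a/2, by omega⟩
      obtain ⟨m, hm⟩ := Int.even_mul_succ_self k
      exact ⟨m, by rw [hk]; nlinarith [hm]⟩
    have key : ∃ ε : ℤ, (ε = 1 ∨ ε = -1 ∨ ε = 5 ∨ ε = -5) ∧ (8:ℤ) ∣ a * ε - 1 := by
      have h8 : a % 8 = 1 ∨ a % 8 = 3 ∨ a % 8 = 5 ∨ a % 8 = 7 := by omega
      rcases h8 with h8 | h8 | h8 | h8
      · exact ⟨1, Or.inl rfl, Int.dvd_of_emod_eq_zero (by omega)⟩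
      · exact ⟨-5, Or.inr (Or.inr (Or.inr rfl)), Int.dvd_of_emod_eq_zero (by omega)⟩
      · exact ⟨5, Or.inr (Or.inr (Or.inl rfl)), Int.dvd_of_emod_eq_zero (by omega)⟩
      · exact ⟨-1, Or.inr (Or.inl rfl), Int.dvd_of_emod_eq_zero (by omega)⟩
    obtain ⟨ε, hεmem, hεa⟩ := key
    have h8e : (8:ℤ) ∣ ε * a' - 1 := by
      have expand : ε * a' - 1
          = (a' * a) * (a * ε - 1) + (a * a' - 1) - (ε * a') * (a^2 - 1) := by ring
      rw [expand]
      exact dvd_sub (dvd_add (Dvd.dvd.mul_left hεa _) h8inv) (Dvd.dvd.mul_left hsq _)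
    obtain ⟨u, hu, husq⟩ := sq_lift (ε * a') (by simpa using h8e) r
    refine ⟨u, ε, hu, ?_, ?_⟩
    · rcases hεmem with h | h | h | h
      · exact Or.inl ⟨h, by omega⟩
      · exact Or.inr (Or.inl ⟨h, by omega⟩)
      · exact Or.inr (Or.inr (Or.inl ⟨h, by omega⟩))
      · exact Or.inr (Or.inr (Or.inr ⟨h, by omega⟩))
    · have expand : u^2 * a - ε = (u^2 - ε * a') * a + ε * (a * a' - 1) := by ring
      rw [expand]
      exact dvd_add (Dvd.dvd.mul_right husq _) (Dvd.dvd.mul_left hinv _)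


section Norm

variable {D : Type*} [AddCommGroup D]
variable (B : D →+ D →+ AddCircle (1:ℚ))

lemma B_zsmul_right (s : ℤ) (u v : D) : B u (s • v) = s • B u v := map_zsmul (B u) s v

lemma B_zsmul_left (s : ℤ) (u v : D) : B (s • u) v = s • B u v := by
  rw [map_zsmul B s u, AddMonoidHom.smul_apply]

lemma nsmul_zsmul_comm (n : ℕ) (p : ℤ) (X : D) : n • (p • X) = p • (n • X) := by
  rw [← natCast_zsmul (p • X) n, ← natCast_zsmul X n, ← mul_zsmul, ← mul_zsmul, mul_comm]

lemma comb_killed {n : ℕ} {X Y : D} (hX : n • X = 0) (hY : n • Y = 0) (p q : ℤ) :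
    n • (p • X + q • Y) = 0 := by
  rw [smul_add, nsmul_zsmul_comm, nsmul_zsmul_comm, hX, hY, smul_zero, smul_zero, add_zero]

lemma B_comb (hsymm : ∀ x y : D, B x y = B y x)
    {n : ℕ} {X Y : D} {tXX tXY tYY : ℤ}
    (hXX : B X X = qz tXX n) (hXY : B X Y = qz tXY n) (hYY : B Y Y = qz tYY n)
    (p q p' q' : ℤ) :
    B (p • X + q • Y) (p' • X + q' • Y)
      = qz (p * p' * tXX + (p * q' + q * p') * tXY + q * q' * tYY) n := by
  have hYX : B Y X = qz tXY n := by rw [hsymm]; exact hXY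
  simp only [map_add, AddMonoidHom.add_apply, B_zsmul_left, B_zsmul_right]
  rw [hXX, hXY, hYX, hYY]
  simp only [qz_zsmul, qz_add]
  congr 1
  ring

/-- Normalization giving the hyperbolic form E. -/
lemma normalize_E (hsymm : ∀ x y : D, B x y = B y x)
    (r : ℕ) (hr : 2 ≤ r) (X Y : D) (hX : 2^r • X = 0) (hY : 2^r • Y = 0)
    (a b : ℤ) (ha : a % 2 = 0)
    (hBXX : B X X = qz (2*a) (2^r)) (hBXY : B X Y = qz 1 (2^r)) (hBYY : B Y Y = qz (2*b) (2^r)) :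
    ∃ e₁ e₂ : D, 2^r • e₁ = 0 ∧ 2^r • e₂ = 0 ∧
      B e₁ e₁ = qz 0 (2^r) ∧ B e₁ e₂ = qz 1 (2^r) ∧ B e₂ e₂ = qz 0 (2^r) := by
  have hn0 : (2:ℕ)^r ≠ 0 := by positivity
  have hcast : (((2^r : ℕ)) : ℤ) = (2:ℤ)^r := by push_cast; ring
  obtain ⟨σ, hσ⟩ := hensel_quad b 1 a rfl ⟨0, by simpa using Int.dvd_of_emod_eq_zero (by omega)⟩ (r-1)
  set e₁ := (1:ℤ) • X + σ • Y with he₁def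
  have he₁ : 2^r • e₁ = 0 := comb_killed hX hY 1 σ
  have hB11 : B e₁ e₁ = qz 0 (2^r) := by
    rw [he₁def, B_comb B hsymm hBXX hBXY hBYY]
    refine qz_eq_of_dvd hn0 ?_
    rw [hcast]
    have key : 1 * 1 * (2*a) + (1 * σ + σ * 1) * 1 + σ * σ * (2*b) - 0
        = 2 * (b * σ^2 + 1 * σ + a) := by ring
    rw [key]
    have h2r : (2:ℤ)^r = 2 * 2^(r-1) := by
      conv_lhs => rw [show r = 1 + (r-1) by omega]
      rw [pow_add, pow_one]
    rw [h2r]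
    exact mul_dvd_mul_left 2 hσ
  -- w = 1 + 2σb
  set w : ℤ := 1 + 2 * σ * b with hwdef
  have hwodd : w % 2 = 1 := by
    obtain ⟨m, hm⟩ : ∃ m, w = 2*m+1 := ⟨σ * b, by rw [hwdef]; ring⟩
    omega
  obtain ⟨w', hw', hww'⟩ := odd_inv w hwodd r
  have hB1Y : B e₁ Y = qz w (2^r) := by
    have : B e₁ Y = B ((1:ℤ) • X + σ • Y) ((0:ℤ) • X + (1:ℤ) • Y) := by
      rw [he₁def]
      congr 1
      rw [zero_zsmul, one_zsmul, zero_add]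
    rw [this, B_comb B hsymm hBXX hBXY hBYY]
    refine qz_eq_of_dvd hn0 ?_
    have : 1 * 0 * (2*a) + (1 * 1 + σ * 0) * 1 + σ * 1 * (2*b) - w = 0 := by rw [hwdef]; ring
    rw [this]
    exact dvd_zero _
  set Y₁ := w' • Y with hY₁def
  have hY₁ : 2^r • Y₁ = 0 := by
    rw [hY₁def, nsmul_zsmul_comm, hY, smul_zero]
  have hB1Y₁ : B e₁ Y₁ = qz 1 (2^r) := by
    rw [hY₁def, B_zsmul_right, hB1Y, qz_zsmul]
    refine qz_eq_of_dvd hn0 ?_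
    rw [hcast]
    have : w' * w - 1 = w * w' - 1 := by ring
    rw [this]
    exact hww'
  set b2 := w'^2 * b with hb2def
  have hBY₁Y₁ : B Y₁ Y₁ = qz (2*b2) (2^r) := by
    rw [hY₁def, B_zsmul_right, B_zsmul_left, hBYY, qz_zsmul, qz_zsmul]
    refine qz_eq_of_dvd hn0 ?_
    have : w' * (w' * (2*b)) - 2*b2 = 0 := by rw [hb2def]; ring
    rw [this]
    exact dvd_zero _
  set e₂ := (-b2) • e₁ + (1:ℤ) • Y₁ with he₂def
  have he₂ : 2^r • e₂ = 0 := comb_killed he₁ hY₁ (-b2) 1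
  refine ⟨e₁, e₂, he₁, he₂, hB11, ?_, ?_⟩
  · have : B e₁ e₂ = B ((1:ℤ) • e₁ + (0:ℤ) • Y₁) ((-b2) • e₁ + (1:ℤ) • Y₁) := by
      congr 1
      rw [zero_zsmul, one_zsmul, add_zero]
    rw [this, B_comb B hsymm hB11 hB1Y₁ hBY₁Y₁]
    refine qz_eq_of_dvd hn0 ?_
    have : 1 * -b2 * 0 + (1 * 1 + 0 * -b2) * 1 + 0 * 1 * (2*b2) - 1 = 0 := by ring
    rw [this]
    exact dvd_zero _
  · rw [he₂def, B_comb B hsymm hB11 hB1Y₁ hBY₁Y₁]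
    refine qz_eq_of_dvd hn0 ?_
    have : -b2 * -b2 * 0 + (-b2 * 1 + 1 * -b2) * 1 + 1 * 1 * (2*b2) - 0 = 0 := by ring
    rw [this]
    exact dvd_zero _

/-- Normalization giving the form F. -/
lemma normalize_F (hsymm : ∀ x y : D, B x y = B y x)
    (r : ℕ) (hr : 2 ≤ r) (X Y : D) (hX : 2^r • X = 0) (hY : 2^r • Y = 0)
    (a b : ℤ) (ha : a % 2 = 1) (hb : b % 2 = 1)
    (hBXX : B X X = qz (2*a) (2^r)) (hBXY : B X Y = qz 1 (2^r)) (hBYY : B Y Y = qz (2*b) (2^r)) :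
    ∃ e₁ e₂ : D, 2^r • e₁ = 0 ∧ 2^r • e₂ = 0 ∧
      B e₁ e₁ = qz 2 (2^r) ∧ B e₁ e₂ = qz 1 (2^r) ∧ B e₂ e₂ = qz 2 (2^r) := by
  have hn0 : (2:ℕ)^r ≠ 0 := by positivity
  have hcast : (((2^r : ℕ)) : ℤ) = (2:ℤ)^r := by push_cast; ring
  have h2r : (2:ℤ)^r = 2 * 2^(r-1) := by
    conv_lhs => rw [show r = 1 + (r-1) by omega]
    rw [pow_add, pow_one]
  obtain ⟨σ, hσ⟩ := hensel_quad b 1 (a-1) rfl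
    ⟨0, by simpa using Int.dvd_of_emod_eq_zero (by omega : (b * 0^2 + 1*0 + (a-1)) % 2 = 0)⟩ (r-1)
  set e₁ := (1:ℤ) • X + σ • Y with he₁def
  have he₁ : 2^r • e₁ = 0 := comb_killed hX hY 1 σ
  have hB11 : B e₁ e₁ = qz 2 (2^r) := by
    rw [he₁def, B_comb B hsymm hBXX hBXY hBYY]
    refine qz_eq_of_dvd hn0 ?_
    rw [hcast]
    have key : 1 * 1 * (2*a) + (1 * σ + σ * 1) * 1 + σ * σ * (2*b) - 2
        = 2 * (b * σ^2 + 1 * σ + (a-1)) := by ring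
    rw [key, h2r]
    exact mul_dvd_mul_left 2 hσ
  set w : ℤ := 1 + 2 * σ * b with hwdef
  have hwodd : w % 2 = 1 := by
    obtain ⟨m, hm⟩ : ∃ m, w = 2*m+1 := ⟨σ * b, by rw [hwdef]; ring⟩
    omega
  obtain ⟨w', hw', hww'⟩ := odd_inv w hwodd r
  have hB1Y : B e₁ Y = qz w (2^r) := by
    have : B e₁ Y = B ((1:ℤ) • X + σ • Y) ((0:ℤ) • X + (1:ℤ) • Y) := by
      rw [he₁def]
      congr 1
      rw [zero_zsmul, one_zsmul, zero_add]
    rw [this, B_comb B hsymm hBXX hBXY hBYY]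
    refine qz_eq_of_dvd hn0 ?_
    have : 1 * 0 * (2*a) + (1 * 1 + σ * 0) * 1 + σ * 1 * (2*b) - w = 0 := by rw [hwdef]; ring
    rw [this]
    exact dvd_zero _
  set Y₁ := w' • Y with hY₁def
  have hY₁ : 2^r • Y₁ = 0 := by
    rw [hY₁def, nsmul_zsmul_comm, hY, smul_zero]
  have hB1Y₁ : B e₁ Y₁ = qz 1 (2^r) := by
    rw [hY₁def, B_zsmul_right, hB1Y, qz_zsmul]
    refine qz_eq_of_dvd hn0 ?_
    rw [hcast]
    have : w' * w - 1 = w * w' - 1 := by ring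
    rw [this]
    exact hww'
  set β := w'^2 * b with hβdef
  have hβodd : β % 2 = 1 := by
    have h1 := Int.mul_emod (w' * w') b 2
    have h2 := Int.mul_emod w' w' 2
    rw [hw'] at h2
    have : β = w' * w' * b := by rw [hβdef]; ring
    rw [this]
    rw [hb] at h1
    omega
  have hBY₁Y₁ : B Y₁ Y₁ = qz (2*β) (2^r) := by
    rw [hY₁def, B_zsmul_right, B_zsmul_left, hBYY, qz_zsmul, qz_zsmul]
    refine qz_eq_of_dvd hn0 ?_
    have : w' * (w' * (2*b)) - 2*β = 0 := by rw [hβdef]; ring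
    rw [this]
    exact dvd_zero _
  obtain ⟨γ, hγ⟩ := hensel_quad (4*β-1) (-(4*β-1)) (β-1) (by omega)
    ⟨0, by
      refine Int.dvd_of_emod_eq_zero ?_
      have : (4*β-1) * 0^2 + (-(4*β-1))*0 + (β-1) = β - 1 := by ring
      rw [this]
      omega⟩ (r-1)
  set e₂ := γ • e₁ + (1 - 2*γ) • Y₁ with he₂def
  have he₂ : 2^r • e₂ = 0 := comb_killed he₁ hY₁ γ (1 - 2*γ)
  refine ⟨e₁, e₂, he₁, he₂, hB11, ?_, ?_⟩
  · have : B e₁ e₂ = B ((1:ℤ) • e₁ + (0:ℤ) • Y₁) (γ • e₁ + (1 - 2*γ) • Y₁) := by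
      congr 1
      rw [zero_zsmul, one_zsmul, add_zero]
    rw [this, B_comb B hsymm hB11 hB1Y₁ hBY₁Y₁]
    refine qz_eq_of_dvd hn0 ?_
    have : 1 * γ * 2 + (1 * (1 - 2*γ) + 0 * γ) * 1 + 0 * (1 - 2*γ) * (2*β) - 1 = 0 := by ring
    rw [this]
    exact dvd_zero _
  · rw [he₂def, B_comb B hsymm hB11 hB1Y₁ hBY₁Y₁]
    refine qz_eq_of_dvd hn0 ?_
    rw [hcast]
    have key : γ * γ * 2 + (γ * (1 - 2*γ) + (1 - 2*γ) * γ) * 1 + (1 - 2*γ) * (1 - 2*γ) * (2*β) - 2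
        = 2 * ((4*β-1) * γ^2 + (-(4*β-1)) * γ + (β-1)) := by ring
    rw [key, h2r]
    exact mul_dvd_mul_left 2 hγ

end Norm


section Split

variable {D : Type*} [AddCommGroup D] [Fintype D]
variable (B : D →+ D →+ AddCircle (1:ℚ))

lemma zsmul_eq_of_mod {n : ℕ} (e : D) (he : n • e = 0) {s t : ℤ} (h : (n:ℤ) ∣ s - t) :
    s • e = t • e := by
  obtain ⟨k, hk⟩ := h
  have h1 : s • e = (t + n * k) • e := by rw [← hk]; ring_nf
  have h2 : (n:ℤ) • e = 0 := by rw [natCast_zsmul]; exact he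
  rw [h1, add_zsmul, mul_comm, mul_zsmul, h2, smul_zero, add_zero]

lemma nsmul_B_killed {n : ℕ} (e : D) (he : n • e = 0) (x : D) : n • B x e = 0 := by
  rw [← AddMonoidHom.map_nsmul, he, AddMonoidHom.map_zero]

lemma split_cyc (hsymm : ∀ x y : D, B x y = B y x)
    (n : ℕ) (hn : 1 < n) (e : D) (he : n • e = 0)
    (a a' : ℤ) (hGram : B e e = qz a n) (hinv : (n:ℤ) ∣ a * a' - 1) :
    ∃ (K : AddSubgroup D) (g : D ≃+ ZMod n × K),
      (∀ x y : D, B x y = cycForm n a ((g x).1) ((g y).1) + B ((g x).2 : D) ((g y).2 : D)) ∧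
      (∀ z : K, (∀ w : K, B (z:D) (w:D) = 0) → (∀ y : D, B (z:D) y = 0)) ∧
      n * Nat.card K = Nat.card D := by
  haveI : NeZero n := ⟨by omega⟩
  have hn0 : n ≠ 0 := by omega
  set K : AddSubgroup D := AddMonoidHom.ker (B.flip e) with hK
  have hmemK : ∀ z : D, z ∈ K ↔ B z e = 0 := by
    intro z
    rw [hK, AddMonoidHom.mem_ker, AddMonoidHom.flip_apply]
  -- the homomorphism
  set ψ : ZMod n × K →+ D := AddMonoidHom.mk'
    (fun p => ((p.1.val : ℤ) • e) + (p.2 : D)) (by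
      rintro ⟨c, z⟩ ⟨d, w⟩
      have hval : (n : ℤ) ∣ (((c + d).val : ℤ) - ((c.val : ℤ) + (d.val : ℤ))) := by
        have h2 : ((c+d).val : ℤ) = ((c.val : ℤ) + (d.val : ℤ)) % (n : ℤ) := by
          have := ZMod.val_add c d
          have h3 : ((c+d).val : ℤ) = (((c.val + d.val) % n : ℕ) : ℤ) := by exact_mod_cast this
          rw [h3]
          push_cast
          rfl
        exact ⟨-(((c.val : ℤ) + (d.val : ℤ)) / (n : ℤ)), by rw [h2, Int.emod_def]; ring⟩
      have h1 : (((c + d).val : ℤ)) • e = ((c.val : ℤ) + (d.val : ℤ)) • e :=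
        zsmul_eq_of_mod e he hval
      simp only [Prod.fst_add, Prod.snd_add, AddSubgroup.coe_add]
      rw [h1, add_zsmul]
      abel) with hψ
  have hψ_apply : ∀ p : ZMod n × K, ψ p = ((p.1.val : ℤ) • e) + (p.2 : D) := fun p => rfl
  -- bilinearity helpers
  have hBz : ∀ (s : ℤ) (u v : D), B u (s • v) = s • B u v := fun s u v => map_zsmul (B u) s v
  have hBz1 : ∀ (s : ℤ) (u v : D), B (s • u) v = s • B u v := by
    intro s u v
    rw [map_zsmul B s u, AddMonoidHom.smul_apply]
  -- pairing of the cyclic part with e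
  have hpair : ∀ c : ZMod n, B ((c.val : ℤ) • e) e = qz ((c.val : ℤ) * a) n := by
    intro c
    rw [hBz1, hGram, qz_zsmul]
  -- injectivity
  have hinj : Function.Injective ψ := by
    rw [injective_iff_map_eq_zero]
    rintro ⟨c, z⟩ hp
    rw [hψ_apply] at hp
    have hz : B (z : D) e = 0 := (hmemK _).1 z.2
    have h0 : B (((c.val : ℤ) • e) + (z : D)) e = 0 := by
      rw [hp]; simp
    rw [AddMonoidHom.map_add, AddMonoidHom.add_apply, hz, add_zero, hpair] at h0
    have hdvd : (n : ℤ) ∣ (c.val : ℤ) * a := (qz_eq_zero_iff hn0 _).1 h0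
    have hdvd2 : (n : ℤ) ∣ (c.val : ℤ) := by
      have h3 : (c.val : ℤ) * (a * a' - 1) = (c.val : ℤ) * a * a' - (c.val : ℤ) := by ring
      have h4 : (n:ℤ) ∣ (c.val : ℤ) * a * a' - (c.val : ℤ) := h3 ▸ Dvd.dvd.mul_left hinv _
      have h5 : (n:ℤ) ∣ (c.val : ℤ) * a * a' := Dvd.dvd.mul_right hdvd _
      have h6 : (c.val : ℤ) = (c.val : ℤ) * a * a' - ((c.val : ℤ) * a * a' - (c.val : ℤ)) := by ring
      rw [h6]
      exact dvd_sub h5 h4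
    have hc : c = 0 := by
      have : ((c.val : ℤ) : ZMod n) = 0 := by
        exact_mod_cast (ZMod.intCast_zmod_eq_zero_iff_dvd _ _).2 hdvd2
      rwa [Int.cast_natCast, ZMod.natCast_val, ZMod.cast_id] at this
    subst hc
    simp only [ZMod.val_zero, Int.natCast_zero, zero_zsmul, zero_add] at hp
    have : z = 0 := Subtype.ext hp
    rw [this]
    rfl
  -- surjectivity
  have hsurj : Function.Surjective ψ := by
    intro x
    have hkill : n • B x e = 0 := nsmul_B_killed B e he x
    obtain ⟨t, ht⟩ := exists_qz hn0 hkill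
    set c : ZMod n := ((t * a' : ℤ) : ZMod n) with hc
    have hcv : (n : ℤ) ∣ (c.val : ℤ) - t * a' := by
      have h1 : ((c.val : ℤ) : ZMod n) = ((t * a' : ℤ) : ZMod n) := by
        rw [Int.cast_natCast, ZMod.natCast_val, ZMod.cast_id]
      rw [ZMod.intCast_eq_intCast_iff] at h1
      exact Int.ModEq.dvd h1.symm
    have hBce : B ((c.val : ℤ) • e) e = B x e := by
      rw [hpair, ht]
      refine qz_eq_of_dvd hn0 ?_
      have expand : (c.val : ℤ) * a - t = ((c.val : ℤ) - t * a') * a + t * (a * a' - 1) := by ring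
      rw [expand]
      exact dvd_add (Dvd.dvd.mul_right hcv _) (Dvd.dvd.mul_left hinv _)
    have hz : x - (c.val : ℤ) • e ∈ K := by
      rw [hmemK, AddMonoidHom.map_sub, AddMonoidHom.sub_apply, hBce, sub_self]
    refine ⟨⟨c, ⟨x - (c.val : ℤ) • e, hz⟩⟩, ?_⟩
    rw [hψ_apply]
    simp
  -- the equivalence
  set gE : (ZMod n × K) ≃+ D := AddEquiv.ofBijective ψ ⟨hinj, hsurj⟩ with hgE
  set g : D ≃+ ZMod n × K := gE.symm with hg
  have hgx : ∀ x : D, (((g x).1.val : ℤ) • e) + ((g x).2 : D) = x := by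
    intro x
    have h : gE (g x) = x := gE.apply_symm_apply x
    conv_rhs => rw [← h]
    rfl
  refine ⟨K, g, ?_, ?_, ?_⟩
  · intro x y
    set c := (g x).1; set z := (g x).2
    set d := (g y).1; set w := (g y).2
    have hx := hgx x; have hy := hgx y
    have hzK : B (z : D) e = 0 := (hmemK _).1 z.2
    have hwK : B (w : D) e = 0 := (hmemK _).1 w.2
    calc B x y = B (((c.val : ℤ) • e) + (z : D)) (((d.val : ℤ) • e) + (w : D)) := by rw [hx, hy]
    _ = B ((c.val : ℤ) • e) ((d.val : ℤ) • e) + B ((c.val : ℤ) • e) (w : D)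
        + (B (z : D) ((d.val : ℤ) • e) + B (z : D) (w : D)) := by
        simp only [map_add, AddMonoidHom.add_apply]
        abel
    _ = cycForm n a c d + B (z : D) (w : D) := by
        have h1 : B ((c.val : ℤ) • e) ((d.val : ℤ) • e) = cycForm n a c d := by
          rw [hBz1, hBz, hGram, qz_zsmul, qz_zsmul, cycForm_eq_qz]
          congr 1
          ring
        have h2 : B ((c.val : ℤ) • e) (w : D) = 0 := by
          rw [hsymm, hBz, hwK, smul_zero]
        have h3 : B (z : D) ((d.val : ℤ) • e) = 0 := by
          rw [hBz, hzK, smul_zero]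
        rw [h1, h2, h3]
        abel
  · intro z hz y
    have hy := hgx y
    have hzK : B (z : D) e = 0 := (hmemK _).1 z.2
    rw [← hy, AddMonoidHom.map_add, hBz, hzK, smul_zero, zero_add]
    exact hz _
  · have h1 : Nat.card D = Nat.card (ZMod n × K) := Nat.card_congr gE.symm.toEquiv
    rw [h1, Nat.card_prod, Nat.card_zmod]

end Split

section Split2

variable {D : Type*} [AddCommGroup D] [Fintype D]
variable (B : D →+ D →+ AddCircle (1:ℚ))

lemma val_add_zsmul {n : ℕ} [NeZero n] (c d : ZMod n) (u : D) (hu : n • u = 0) :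
    (((c + d).val : ℤ)) • u = ((c.val : ℤ)) • u + ((d.val : ℤ)) • u := by
  rw [← add_zsmul]
  refine zsmul_eq_of_mod u hu ?_
  have h2 : ((c+d).val : ℤ) = ((c.val : ℤ) + (d.val : ℤ)) % (n : ℤ) := by
    have := ZMod.val_add c d
    have h3 : ((c+d).val : ℤ) = (((c.val + d.val) % n : ℕ) : ℤ) := by exact_mod_cast this
    rw [h3]; push_cast; rfl
  exact ⟨-(((c.val : ℤ) + (d.val : ℤ)) / (n : ℤ)), by rw [h2, Int.emod_def]; ring⟩

lemma int_zmod_val_mod {n : ℕ} [NeZero n] (t : ℤ) :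
    (n : ℤ) ∣ ((((t : ZMod n)).val : ℤ) - t) := by
  have h1 : ((((t : ZMod n)).val : ℤ) : ZMod n) = ((t : ℤ) : ZMod n) := by
    rw [Int.cast_natCast, ZMod.natCast_val, ZMod.cast_id]
  rw [ZMod.intCast_eq_intCast_iff] at h1
  exact Int.ModEq.dvd h1.symm

lemma split_rank2 (hsymm : ∀ x y : D, B x y = B y x)
    (n : ℕ) (hn : 1 < n) (e₁ e₂ : D) (he₁ : n • e₁ = 0) (he₂ : n • e₂ = 0)
    (G11 G12 G22 d' : ℤ)
    (h11 : B e₁ e₁ = qz G11 n) (h12 : B e₁ e₂ = qz G12 n) (h22 : B e₂ e₂ = qz G22 n)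
    (hinv : (n:ℤ) ∣ (G11 * G22 - G12^2) * d' - 1) :
    ∃ (K : AddSubgroup D) (g : D ≃+ (ZMod n × ZMod n) × K),
      (∀ x y : D, B x y = rankTwoForm n (G11, G12, G22) ((g x).1) ((g y).1)
          + B ((g x).2 : D) ((g y).2 : D)) ∧
      (∀ z : K, (∀ w : K, B (z:D) (w:D) = 0) → (∀ y : D, B (z:D) y = 0)) ∧
      (n * n) * Nat.card K = Nat.card D := by
  haveI : NeZero n := ⟨by omega⟩
  have hn0 : n ≠ 0 := by omega
  have h21 : B e₂ e₁ = qz G12 n := by rw [hsymm]; exact h12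
  set detG := G11 * G22 - G12^2 with hdetG
  set K : AddSubgroup D := AddMonoidHom.ker (B.flip e₁) ⊓ AddMonoidHom.ker (B.flip e₂) with hK
  have hmemK : ∀ z : D, z ∈ K ↔ (B z e₁ = 0 ∧ B z e₂ = 0) := by
    intro z
    rw [hK, AddSubgroup.mem_inf, AddMonoidHom.mem_ker, AddMonoidHom.mem_ker,
      AddMonoidHom.flip_apply, AddMonoidHom.flip_apply]
  have hBz : ∀ (s : ℤ) (u v : D), B u (s • v) = s • B u v := fun s u v => map_zsmul (B u) s v
  have hBz1 : ∀ (s : ℤ) (u v : D), B (s • u) v = s • B u v := by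
    intro s u v
    rw [map_zsmul B s u, AddMonoidHom.smul_apply]
  set ψ : (ZMod n × ZMod n) × K →+ D := AddMonoidHom.mk'
    (fun p => ((p.1.1.val : ℤ) • e₁ + (p.1.2.val : ℤ) • e₂) + (p.2 : D)) (by
      rintro ⟨⟨c, d⟩, z⟩ ⟨⟨c', d''⟩, w⟩
      simp only [Prod.fst_add, Prod.snd_add, AddSubgroup.coe_add]
      rw [val_add_zsmul c c' e₁ he₁, val_add_zsmul d d'' e₂ he₂]
      abel) with hψ
  have hψ_apply : ∀ p : (ZMod n × ZMod n) × K,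
      ψ p = ((p.1.1.val : ℤ) • e₁ + (p.1.2.val : ℤ) • e₂) + (p.2 : D) := fun p => rfl
  -- pairings
  have hpair1 : ∀ c d : ZMod n, B ((c.val : ℤ) • e₁ + (d.val : ℤ) • e₂) e₁
      = qz ((c.val : ℤ) * G11 + (d.val : ℤ) * G12) n := by
    intro c d
    rw [map_add, AddMonoidHom.add_apply, hBz1, hBz1, h11, h21, qz_zsmul, qz_zsmul, qz_add]
  have hpair2 : ∀ c d : ZMod n, B ((c.val : ℤ) • e₁ + (d.val : ℤ) • e₂) e₂
      = qz ((c.val : ℤ) * G12 + (d.val : ℤ) * G22) n := by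
    intro c d
    rw [map_add, AddMonoidHom.add_apply, hBz1, hBz1, h12, h22, qz_zsmul, qz_zsmul, qz_add]
  -- injectivity
  have hinj : Function.Injective ψ := by
    rw [injective_iff_map_eq_zero]
    rintro ⟨⟨c, d⟩, z⟩ hp
    rw [hψ_apply] at hp
    simp only at hp
    obtain ⟨hz1, hz2⟩ := (hmemK _).1 z.2
    have h01 : qz ((c.val : ℤ) * G11 + (d.val : ℤ) * G12) n = 0 := by
      rw [← hpair1 c d]
      have : B ((c.val : ℤ) • e₁ + (d.val : ℤ) • e₂ + (z:D)) e₁ = 0 := by rw [hp]; simp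
      rw [map_add, AddMonoidHom.add_apply, hz1, add_zero] at this
      exact this
    have h02 : qz ((c.val : ℤ) * G12 + (d.val : ℤ) * G22) n = 0 := by
      rw [← hpair2 c d]
      have : B ((c.val : ℤ) • e₁ + (d.val : ℤ) • e₂ + (z:D)) e₂ = 0 := by rw [hp]; simp
      rw [map_add, AddMonoidHom.add_apply, hz2, add_zero] at this
      exact this
    have hd1 := (qz_eq_zero_iff hn0 _).1 h01
    have hd2 := (qz_eq_zero_iff hn0 _).1 h02
    have hcd : (n:ℤ) ∣ (c.val : ℤ) ∧ (n:ℤ) ∣ (d.val : ℤ) := by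
      constructor
      · have key : (c.val : ℤ) = (G22 * ((c.val : ℤ) * G11 + (d.val : ℤ) * G12)
            - G12 * ((c.val : ℤ) * G12 + (d.val : ℤ) * G22)) * d'
            - (c.val : ℤ) * (detG * d' - 1) := by rw [hdetG]; ring
        rw [key]
        exact dvd_sub (Dvd.dvd.mul_right (dvd_sub (Dvd.dvd.mul_left hd1 _) (Dvd.dvd.mul_left hd2 _)) _)
          (Dvd.dvd.mul_left hinv _)
      · have key : (d.val : ℤ) = (G11 * ((c.val : ℤ) * G12 + (d.val : ℤ) * G22)
            - G12 * ((c.val : ℤ) * G11 + (d.val : ℤ) * G12)) * d'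
            - (d.val : ℤ) * (detG * d' - 1) := by rw [hdetG]; ring
        rw [key]
        exact dvd_sub (Dvd.dvd.mul_right (dvd_sub (Dvd.dvd.mul_left hd2 _) (Dvd.dvd.mul_left hd1 _)) _)
          (Dvd.dvd.mul_left hinv _)
    have hc : c = 0 := by
      have : ((c.val : ℤ) : ZMod n) = 0 := by
        exact_mod_cast (ZMod.intCast_zmod_eq_zero_iff_dvd _ _).2 hcd.1
      rwa [Int.cast_natCast, ZMod.natCast_val, ZMod.cast_id] at this
    have hd : d = 0 := by
      have : ((d.val : ℤ) : ZMod n) = 0 := by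
        exact_mod_cast (ZMod.intCast_zmod_eq_zero_iff_dvd _ _).2 hcd.2
      rwa [Int.cast_natCast, ZMod.natCast_val, ZMod.cast_id] at this
    subst hc; subst hd
    simp only [ZMod.val_zero, Int.natCast_zero, zero_zsmul, zero_add, add_zero] at hp
    have : z = 0 := Subtype.ext hp
    rw [this]
    rfl
  -- surjectivity
  have hsurj : Function.Surjective ψ := by
    intro x
    obtain ⟨t₁, ht₁⟩ := exists_qz hn0 (nsmul_B_killed B e₁ he₁ x)
    obtain ⟨t₂, ht₂⟩ := exists_qz hn0 (nsmul_B_killed B e₂ he₂ x)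
    set c : ZMod n := ((d' * (G22 * t₁ - G12 * t₂) : ℤ) : ZMod n) with hc
    set d : ZMod n := ((d' * (G11 * t₂ - G12 * t₁) : ℤ) : ZMod n) with hd
    have hcv := int_zmod_val_mod (n := n) (d' * (G22 * t₁ - G12 * t₂))
    have hdv := int_zmod_val_mod (n := n) (d' * (G11 * t₂ - G12 * t₁))
    rw [← hc] at hcv
    rw [← hd] at hdv
    have hB1 : B ((c.val : ℤ) • e₁ + (d.val : ℤ) • e₂) e₁ = B x e₁ := by
      rw [hpair1, ht₁]
      refine qz_eq_of_dvd hn0 ?_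
      have expand : (c.val : ℤ) * G11 + (d.val : ℤ) * G12 - t₁
          = ((c.val : ℤ) - d' * (G22 * t₁ - G12 * t₂)) * G11
          + ((d.val : ℤ) - d' * (G11 * t₂ - G12 * t₁)) * G12
          + t₁ * (detG * d' - 1) := by rw [hdetG]; ring
      rw [expand]
      exact dvd_add (dvd_add (Dvd.dvd.mul_right hcv _) (Dvd.dvd.mul_right hdv _))
        (Dvd.dvd.mul_left hinv _)
    have hB2 : B ((c.val : ℤ) • e₁ + (d.val : ℤ) • e₂) e₂ = B x e₂ := by
      rw [hpair2, ht₂]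
      refine qz_eq_of_dvd hn0 ?_
      have expand : (c.val : ℤ) * G12 + (d.val : ℤ) * G22 - t₂
          = ((c.val : ℤ) - d' * (G22 * t₁ - G12 * t₂)) * G12
          + ((d.val : ℤ) - d' * (G11 * t₂ - G12 * t₁)) * G22
          + t₂ * (detG * d' - 1) := by rw [hdetG]; ring
      rw [expand]
      exact dvd_add (dvd_add (Dvd.dvd.mul_right hcv _) (Dvd.dvd.mul_right hdv _))
        (Dvd.dvd.mul_left hinv _)
    have hz : x - ((c.val : ℤ) • e₁ + (d.val : ℤ) • e₂) ∈ K := by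
      rw [hmemK]
      constructor
      · rw [AddMonoidHom.map_sub, AddMonoidHom.sub_apply, hB1, sub_self]
      · rw [AddMonoidHom.map_sub, AddMonoidHom.sub_apply, hB2, sub_self]
    refine ⟨⟨(c, d), ⟨x - ((c.val : ℤ) • e₁ + (d.val : ℤ) • e₂), hz⟩⟩, ?_⟩
    rw [hψ_apply]
    simp
  set gE : ((ZMod n × ZMod n) × K) ≃+ D := AddEquiv.ofBijective ψ ⟨hinj, hsurj⟩ with hgE
  set g : D ≃+ (ZMod n × ZMod n) × K := gE.symm with hg
  have hgx : ∀ x : D, ((((g x).1.1.val : ℤ) • e₁ + ((g x).1.2.val : ℤ) • e₂) + ((g x).2 : D)) = x := by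
    intro x
    have h : gE (g x) = x := gE.apply_symm_apply x
    conv_rhs => rw [← h]
    rfl
  have horthog : ∀ (q : D) (c d : ZMod n), B q e₁ = 0 → B q e₂ = 0 →
      B q ((c.val : ℤ) • e₁ + (d.val : ℤ) • e₂) = 0 := by
    intro q c d hq1 hq2
    rw [map_add, hBz, hBz, hq1, hq2, smul_zero, smul_zero, add_zero]
  refine ⟨K, g, ?_, ?_, ?_⟩
  · intro x y
    set c := (g x).1.1 with hc0; set d := (g x).1.2 with hd0; set z := (g x).2 with hz0
    set c' := (g y).1.1 with hc0'; set d'' := (g y).1.2 with hd0'; set w := (g y).2 with hw0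
    have hx := hgx x; have hy := hgx y
    obtain ⟨hz1, hz2⟩ := (hmemK _).1 z.2
    obtain ⟨hw1, hw2⟩ := (hmemK _).1 w.2
    set u := (c.val : ℤ) • e₁ + (d.val : ℤ) • e₂ with hu
    set v := (c'.val : ℤ) • e₁ + (d''.val : ℤ) • e₂ with hv
    have hcross1 : B u (w : D) = 0 := by
      rw [hsymm]
      exact horthog _ _ _ hw1 hw2
    have hcross2 : B (z : D) v = 0 := horthog _ _ _ hz1 hz2
    have hmain : B u v = rankTwoForm n (G11, G12, G22) ((g x).1) ((g y).1) := by
      have h1 : B u v = (c'.val : ℤ) • B u e₁ + (d''.val : ℤ) • B u e₂ := by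
        rw [hv, map_add, hBz, hBz]
      rw [h1, hu, hpair1, hpair2, qz_zsmul, qz_zsmul, qz_add, rankTwoForm_eq_qz]
      congr 1
      simp only [← hc0, ← hd0, ← hc0', ← hd0']
      ring
    calc B x y = B (u + ((g x).2 : D)) (v + ((g y).2 : D)) := by rw [hx, hy]
    _ = B u v + B u ((g y).2 : D) + (B ((g x).2 : D) v + B ((g x).2 : D) ((g y).2 : D)) := by
        simp only [map_add, AddMonoidHom.add_apply]
        abel
    _ = rankTwoForm n (G11, G12, G22) ((g x).1) ((g y).1) + B ((g x).2 : D) ((g y).2 : D) := by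
        rw [hmain, hcross1, hcross2]
        abel
  · intro z hz y
    have hy := hgx y
    obtain ⟨hz1, hz2⟩ := (hmemK _).1 z.2
    rw [← hy, map_add, horthog _ _ _ hz1 hz2, zero_add]
    exact hz _
  · have h1 : Nat.card D = Nat.card ((ZMod n × ZMod n) × K) := Nat.card_congr gE.symm.toEquiv
    rw [h1, Nat.card_prod, Nat.card_prod, Nat.card_zmod]

end Split2


def Decomp (D : Type*) [AddCommGroup D] (b : D → D → AddCircle (1:ℚ)) : Prop :=
  ∃ (k l : ℕ) (r : Fin k → ℕ) (a : Fin k → ℤ) (s : Fin l → ℕ) (c : Fin l → ℤ × ℤ × ℤ),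
      (∀ i, (a i = 1 ∧ 1 ≤ r i) ∨ (a i = -1 ∧ 2 ≤ r i) ∨
            (a i = 5 ∧ 3 ≤ r i) ∨ (a i = -5 ∧ 3 ≤ r i)) ∧
      (∀ j, (c j = (0, 1, 0) ∧ 1 ≤ s j) ∨ (c j = (2, 1, 2) ∧ 2 ≤ s j)) ∧
      ∃ f : D ≃+ ((∀ i : Fin k, ZMod (2 ^ r i)) ×
                  (∀ j : Fin l, ZMod (2 ^ s j) × ZMod (2 ^ s j))),
        ∀ x y : D,
          (∑ i, cycForm (2 ^ r i) (a i) ((f x).1 i) ((f y).1 i)) +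
          (∑ j, rankTwoForm (2 ^ s j) (c j) ((f x).2 j) ((f y).2 j)) = b x y

lemma decomp_trivial (D : Type*) [AddCommGroup D] [Fintype D]
    (b : D → D → AddCircle (1:ℚ)) (hcard : Fintype.card D = 1)
    (hb : ∀ x y : D, b x y = 0) : Decomp D b := by
  haveI hsub : Subsingleton D := Fintype.card_le_one_iff_subsingleton.1 (le_of_eq hcard)
  refine ⟨0, 0, Fin.elim0, Fin.elim0, Fin.elim0, Fin.elim0,
    fun i => i.elim0, fun j => j.elim0, ?_⟩
  haveI hsubT : Subsingleton ((∀ i : Fin 0, ZMod (2 ^ Fin.elim0 i)) ×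
      (∀ j : Fin 0, ZMod (2 ^ Fin.elim0 j) × ZMod (2 ^ Fin.elim0 j))) := by
    constructor
    rintro ⟨p, q⟩ ⟨p', q'⟩
    have hp : p = p' := funext fun i => i.elim0
    have hq : q = q' := funext fun j => j.elim0
    rw [hp, hq]
  refine ⟨AddEquiv.mk ⟨fun _ => 0, fun _ => 0, fun x => Subsingleton.elim _ _,
    fun t => Subsingleton.elim _ _⟩ (fun _ _ => (Subsingleton.elim _ _)), ?_⟩
  intro x y
  rw [hb]
  simp

section Steps

variable {D K : Type*} [AddCommGroup D] [AddCommGroup K]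

lemma decomp_step_cyc (b : D → D → AddCircle (1:ℚ)) (bK : K → K → AddCircle (1:ℚ))
    (r₀ : ℕ) (a₀ : ℤ)
    (ha₀ : (a₀ = 1 ∧ 1 ≤ r₀) ∨ (a₀ = -1 ∧ 2 ≤ r₀) ∨ (a₀ = 5 ∧ 3 ≤ r₀) ∨ (a₀ = -5 ∧ 3 ≤ r₀))
    (g : D ≃+ ZMod (2 ^ r₀) × K)
    (hform : ∀ x y : D, b x y = cycForm (2 ^ r₀) a₀ ((g x).1) ((g y).1) + bK ((g x).2) ((g y).2))
    (hK : Decomp K bK) : Decomp D b := by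
  obtain ⟨k, l, r, a, s, c, h1, h2, f', hf'⟩ := hK
  refine ⟨k + 1, l, Fin.cons r₀ r, Fin.cons a₀ a, s, c, ?_, h2, ?_⟩
  · intro i
    refine Fin.cases ?_ ?_ i
    · simpa using ha₀
    · intro j
      simpa using h1 j
  set Q := (∀ j : Fin l, ZMod (2 ^ s j) × ZMod (2 ^ s j)) with hQ
  set P := (∀ i : Fin k, ZMod (2 ^ r i)) with hP
  set T := (∀ i : Fin (k+1), ZMod (2 ^ Fin.cons r₀ r i)) with hT
  set assembler : (ZMod (2 ^ r₀) × (P × Q)) ≃+ (T × Q) := AddEquiv.mk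
    ⟨fun p => (Fin.cons (α := fun i : Fin (k+1) => ZMod (2 ^ Fin.cons r₀ r i)) p.1 p.2.1, p.2.2),
      fun q => (q.1 0, (fun i => q.1 i.succ, q.2)),
      fun p => Prod.ext rfl (Prod.ext (funext fun i => rfl) rfl),
      fun q => Prod.ext (funext fun i => Fin.cases rfl (fun j => rfl) i) rfl⟩
    (fun p p' => Prod.ext (funext fun i => Fin.cases rfl (fun j => rfl) i) rfl) with hassembler
  refine ⟨(g.trans ((AddEquiv.refl (ZMod (2 ^ r₀))).prodCongr f')).trans assembler, ?_⟩
  intro x y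
  rw [Fin.sum_univ_succ]
  show cycForm (2 ^ r₀) a₀ ((g x).1) ((g y).1)
      + (∑ i : Fin k, cycForm (2 ^ r i) (a i) ((f' (g x).2).1 i) ((f' (g y).2).1 i))
      + (∑ j, rankTwoForm (2 ^ s j) (c j) ((f' (g x).2).2 j) ((f' (g y).2).2 j)) = b x y
  rw [add_assoc, hf' ((g x).2) ((g y).2), ← hform]
lemma decomp_step_rank2 (b : D → D → AddCircle (1:ℚ)) (bK : K → K → AddCircle (1:ℚ))
    (s₀ : ℕ) (c₀ : ℤ × ℤ × ℤ)
    (hc₀ : (c₀ = (0, 1, 0) ∧ 1 ≤ s₀) ∨ (c₀ = (2, 1, 2) ∧ 2 ≤ s₀))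
    (g : D ≃+ (ZMod (2 ^ s₀) × ZMod (2 ^ s₀)) × K)
    (hform : ∀ x y : D, b x y = rankTwoForm (2 ^ s₀) c₀ ((g x).1) ((g y).1) + bK ((g x).2) ((g y).2))
    (hK : Decomp K bK) : Decomp D b := by
  obtain ⟨k, l, r, a, s, c, h1, h2, f', hf'⟩ := hK
  refine ⟨k, l + 1, r, a, Fin.cons s₀ s, Fin.cons c₀ c, h1, ?_, ?_⟩
  · intro j
    refine Fin.cases ?_ ?_ j
    · simpa using hc₀
    · intro j'
      simpa using h2 j'
  set Q := (∀ j : Fin l, ZMod (2 ^ s j) × ZMod (2 ^ s j)) with hQ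
  set P := (∀ i : Fin k, ZMod (2 ^ r i)) with hP
  set T := (∀ j : Fin (l+1), ZMod (2 ^ Fin.cons s₀ s j) × ZMod (2 ^ Fin.cons s₀ s j)) with hT
  set assembler : ((ZMod (2 ^ s₀) × ZMod (2 ^ s₀)) × (P × Q)) ≃+ (P × T) := AddEquiv.mk
    ⟨fun p => (p.2.1, Fin.cons (α := fun j : Fin (l+1) => ZMod (2 ^ Fin.cons s₀ s j) × ZMod (2 ^ Fin.cons s₀ s j)) p.1 p.2.2),
      fun q => (q.2 0, (q.1, fun j => q.2 j.succ)),
      fun p => Prod.ext rfl (Prod.ext rfl (funext fun j => rfl)),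
      fun q => Prod.ext rfl (funext fun j => Fin.cases rfl (fun j' => rfl) j)⟩
    (fun p p' => Prod.ext rfl (funext fun j => Fin.cases rfl (fun j' => rfl) j)) with hassembler
  refine ⟨(g.trans ((AddEquiv.refl _).prodCongr f')).trans assembler, ?_⟩
  intro x y
  rw [Fin.sum_univ_succ (n := l)]
  show (∑ i : Fin k, cycForm (2 ^ r i) (a i) ((f' (g x).2).1 i) ((f' (g y).2).1 i))
      + (rankTwoForm (2 ^ s₀) c₀ ((g x).1) ((g y).1)
        + ∑ j : Fin l, rankTwoForm (2 ^ s j) (c j) ((f' (g x).2).2 j) ((f' (g y).2).2 j)) = b x y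
  rw [add_left_comm, hf' ((g x).2) ((g y).2), ← hform]

end Steps


universe u

lemma main_aux : ∀ (N : ℕ) (D : Type u) [AddCommGroup D] [Fintype D],
    Fintype.card D ≤ N →
    ∀ (B : D →+ D →+ AddCircle (1:ℚ)),
    (∀ x y : D, B x y = B y x) →
    (∀ x : D, ∃ k : ℕ, 2 ^ k • x = 0) →
    (∀ x : D, (∀ y : D, B x y = 0) → x = 0) →
    Decomp D (fun x y => B x y) := by
  intro N
  induction N with
  | zero =>
    intro D _ _ hcard
    have := Fintype.card_pos (α := D)
    omega
  | succ N ih =>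
    intro D _ _ hcard B hsymm h2grp hnd
    classical
    by_cases hD1 : Fintype.card D = 1
    · refine decomp_trivial D _ hD1 ?_
      haveI : Subsingleton D := Fintype.card_le_one_iff_subsingleton.1 (le_of_eq hD1)
      intro x y
      have hx : x = (0:D) := Subsingleton.elim _ _
      rw [hx]
      simp
    -- find an exponent bound
    have hex : ∃ m : ℕ, ∀ x : D, 2^m • x = 0 := by
      choose kf hkf using h2grp
      refine ⟨Finset.univ.sup kf, fun x => ?_⟩
      have hle : kf x ≤ Finset.univ.sup kf := Finset.le_sup (Finset.mem_univ x)
      obtain ⟨d, hd⟩ := Nat.exists_eq_add_of_le hle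
      rw [hd, pow_add, mul_comm, mul_smul, hkf, smul_zero]
    set r := Nat.find hex with hrdef
    have hrall : ∀ x : D, 2^r • x = 0 := Nat.find_spec hex
    have hr1 : 1 ≤ r := by
      rcases Nat.eq_zero_or_pos r with h0 | h0
      · exfalso
        apply hD1
        refine Fintype.card_eq_one_iff.2 ⟨0, fun x => ?_⟩
        have := hrall x
        rw [h0, pow_zero, one_smul] at this
        exact this
      · exact h0
    have hxmax : ∃ x₀ : D, 2^(r-1) • x₀ ≠ 0 := by
      by_contra h
      push_neg at h
      exact Nat.find_min hex (show r - 1 < r by omega) h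
    have hn0 : (2:ℕ)^r ≠ 0 := by positivity
    have hn1 : 1 < 2^r := by
      have : (2:ℕ)^0 < 2^r := Nat.pow_lt_pow_right one_lt_two (by omega)
      simpa using this
    have hcast : (((2^r : ℕ)) : ℤ) = (2:ℤ)^r := by push_cast; ring
    have h2r : (2:ℤ)^r = 2 * 2^(r-1) := by
      conv_lhs => rw [show r = 1 + (r-1) by omega]
      rw [pow_add, pow_one]
    have hcast1 : (((2^(r-1) : ℕ)) : ℤ) = (2:ℤ)^(r-1) := by push_cast; ring
    -- helper to finish by recursion after splitting
    have recurse : ∀ (K : AddSubgroup D),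
        (∀ z : K, (∀ w : K, B (z:D) (w:D) = 0) → (∀ y : D, B (z:D) y = 0)) →
        Nat.card K ≤ N →
        Decomp ↥K (fun z w => B (z:D) (w:D)) := by
      intro K horth hcardK
      letI : Fintype ↥K := Fintype.ofFinite ↥K
      set BK : ↥K →+ ↥K →+ AddCircle (1:ℚ) := ((B.comp K.subtype).flip.comp K.subtype).flip
        with hBKdef
      have hBK : ∀ z w : ↥K, BK z w = B (z:D) (w:D) := fun z w => rfl
      have hKsymm : ∀ z w : ↥K, BK z w = BK w z := fun z w => hsymm _ _
      have hK2grp : ∀ z : ↥K, ∃ k : ℕ, 2^k • z = 0 := by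
        intro z
        obtain ⟨k, hk⟩ := h2grp (z:D)
        exact ⟨k, Subtype.ext hk⟩
      have hKnd : ∀ z : ↥K, (∀ w : ↥K, BK z w = 0) → z = 0 := by
        intro z hz
        have h0 : ∀ y : D, B (z:D) y = 0 := horth z (fun w => hz w)
        exact Subtype.ext (hnd (z:D) h0)
      have hcardle : Fintype.card ↥K ≤ N := by
        have h1 : Nat.card ↥K = Fintype.card ↥K := Nat.card_eq_fintype_card
        omega
      exact ih ↥K hcardle BK hKsymm hK2grp hKnd
    have hcardbound : ∀ (K : AddSubgroup D) (m : ℕ), 2 ≤ m → m * Nat.card K = Nat.card D →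
        Nat.card K ≤ N := by
      intro K m hm hcard2
      have h2 : Nat.card D = Fintype.card D := Nat.card_eq_fintype_card
      have h3 : 0 < Nat.card ↥K := Nat.card_pos
      nlinarith [hcard2, hcard, h2, h3]
    by_cases hA : ∃ x : D, 2^(r-1) • (B x x) ≠ 0
    -- Case A : split off a cyclic summand
    · obtain ⟨x, hx⟩ := hA
      obtain ⟨a, ha⟩ := exists_qz hn0 (nsmul_B_killed B x (hrall x) x)
      have haodd : a % 2 = 1 := by
        by_contra h
        obtain ⟨m, hm⟩ : ∃ m, a = 2 * m := ⟨a / 2, by omega⟩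
        apply hx
        rw [ha, qz_nsmul]
        refine (qz_eq_zero_iff hn0 _).2 ?_
        rw [hcast, hcast1, hm, h2r]
        exact ⟨m, by ring⟩
      obtain ⟨u, ε, huodd, hεmem, hdvd⟩ := unit_class a haodd r hr1
      set e := u • x with hedef
      have he : 2^r • e = 0 := by rw [hedef, nsmul_zsmul_comm, hrall, smul_zero]
      have hGram : B e e = qz ε (2^r) := by
        rw [hedef, B_zsmul_left, B_zsmul_right, ha, qz_zsmul, qz_zsmul]
        refine qz_eq_of_dvd hn0 ?_
        rw [hcast]
        have : u * (u * a) - ε = u^2 * a - ε := by ring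
        rw [this]
        exact hdvd
      have hεodd : ε % 2 = 1 := by
        rcases hεmem with ⟨h, _⟩ | ⟨h, _⟩ | ⟨h, _⟩ | ⟨h, _⟩ <;> rw [h] <;> decide
      obtain ⟨ε', hε'odd, hεinv⟩ := odd_inv ε hεodd r
      obtain ⟨K, g, hform, horth, hcardK⟩ := split_cyc B hsymm (2^r) hn1 e he ε ε' hGram
        (by rw [hcast]; exact hεinv)
      have hKdec := recurse K horth (hcardbound K (2^r) (by omega) hcardK)
      exact decomp_step_cyc (K := ↥K) (fun x y => B x y) (fun z w => B (z:D) (w:D)) r ε hεmem g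
        hform hKdec
    -- Case B : split off a rank-two summand
    · push_neg at hA
      obtain ⟨x₀, hx₀⟩ := hxmax
      have hy : ∃ y : D, B (2^(r-1) • x₀) y ≠ 0 := by
        by_contra h
        push_neg at h
        exact hx₀ (hnd _ h)
      obtain ⟨y, hyne⟩ := hy
      have hBxy : 2^(r-1) • B x₀ y ≠ 0 := by
        intro h
        apply hyne
        rw [map_nsmul, AddMonoidHom.smul_apply, h]
      obtain ⟨t, ht⟩ := exists_qz hn0 (nsmul_B_killed B y (hrall y) x₀)
      have htodd : t % 2 = 1 := by
        by_contra h
        obtain ⟨m, hm⟩ : ∃ m, t = 2 * m := ⟨t / 2, by omega⟩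
        apply hBxy
        rw [ht, qz_nsmul]
        refine (qz_eq_zero_iff hn0 _).2 ?_
        rw [hcast, hcast1, hm, h2r]
        exact ⟨m, by ring⟩
      obtain ⟨s1, hs1⟩ := exists_qz hn0 (nsmul_B_killed B x₀ (hrall x₀) x₀)
      obtain ⟨s2, hs2⟩ := exists_qz hn0 (nsmul_B_killed B y (hrall y) y)
      have hs1even : s1 % 2 = 0 := by
        have h0 := hA x₀
        rw [hs1, qz_nsmul] at h0
        have hdvd := (qz_eq_zero_iff hn0 _).1 h0
        rw [hcast, hcast1, h2r] at hdvd
        obtain ⟨m, hm⟩ := hdvd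
        have h2 : (2:ℤ)^(r-1) ≠ 0 := by positivity
        have h3 : (2:ℤ)^(r-1) * s1 = 2^(r-1) * (2 * m) := by linear_combination hm
        have : s1 = 2 * m := mul_left_cancel₀ h2 h3
        omega
      have hs2even : s2 % 2 = 0 := by
        have h0 := hA y
        rw [hs2, qz_nsmul] at h0
        have hdvd := (qz_eq_zero_iff hn0 _).1 h0
        rw [hcast, hcast1, h2r] at hdvd
        obtain ⟨m, hm⟩ := hdvd
        have h2 : (2:ℤ)^(r-1) ≠ 0 := by positivity
        have h3 : (2:ℤ)^(r-1) * s2 = 2^(r-1) * (2 * m) := by linear_combination hm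
        have : s2 = 2 * m := mul_left_cancel₀ h2 h3
        omega
      have hEF : (∃ e₁ e₂ : D, 2^r • e₁ = 0 ∧ 2^r • e₂ = 0 ∧
            B e₁ e₁ = qz 0 (2^r) ∧ B e₁ e₂ = qz 1 (2^r) ∧ B e₂ e₂ = qz 0 (2^r)) ∨
          ((∃ e₁ e₂ : D, 2^r • e₁ = 0 ∧ 2^r • e₂ = 0 ∧
            B e₁ e₁ = qz 2 (2^r) ∧ B e₁ e₂ = qz 1 (2^r) ∧ B e₂ e₂ = qz 2 (2^r)) ∧ 2 ≤ r) := by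
        rcases (show r = 1 ∨ 2 ≤ r by omega) with hr2 | hr2
        · left
          refine ⟨x₀, y, hrall x₀, hrall y, ?_, ?_, ?_⟩
          · rw [hs1]
            refine qz_eq_of_dvd hn0 ?_
            rw [hcast, hr2, pow_one]
            omega
          · rw [ht]
            refine qz_eq_of_dvd hn0 ?_
            rw [hcast, hr2, pow_one]
            omega
          · rw [hs2]
            refine qz_eq_of_dvd hn0 ?_
            rw [hcast, hr2, pow_one]
            omega
        · obtain ⟨a, haa⟩ : ∃ m, s1 = 2 * m := ⟨s1/2, by omega⟩
          obtain ⟨b0, hb0⟩ : ∃ m, s2 = 2 * m := ⟨s2/2, by omega⟩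
          obtain ⟨t', ht'odd, htt'⟩ := odd_inv t htodd r
          set Y₁ := t' • y with hY₁def
          have hY₁kill : 2^r • Y₁ = 0 := by rw [hY₁def, nsmul_zsmul_comm, hrall, smul_zero]
          have hBxY₁ : B x₀ Y₁ = qz 1 (2^r) := by
            rw [hY₁def, B_zsmul_right, ht, qz_zsmul]
            refine qz_eq_of_dvd hn0 ?_
            rw [hcast]
            have hcomm : t' * t - 1 = t * t' - 1 := by ring
            rw [hcomm]
            exact htt'
          set b1 := t'^2 * b0 with hb1def
          have hBY₁Y₁ : B Y₁ Y₁ = qz (2*b1) (2^r) := by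
            rw [hY₁def, B_zsmul_right, B_zsmul_left, hs2, qz_zsmul, qz_zsmul]
            refine qz_eq_of_dvd hn0 ?_
            have hz : t' * (t' * s2) - 2*b1 = 0 := by rw [hb1def, hb0]; ring
            rw [hz]
            exact dvd_zero _
          have hBxx : B x₀ x₀ = qz (2*a) (2^r) := by rw [hs1, haa]
          by_cases hae : a % 2 = 0
          · exact Or.inl (normalize_E B hsymm r hr2 x₀ Y₁ (hrall x₀) hY₁kill a b1 hae
              hBxx hBxY₁ hBY₁Y₁)
          · by_cases hbe : b1 % 2 = 0
            · left
              have hsymm' : B Y₁ x₀ = qz 1 (2^r) := by rw [hsymm]; exact hBxY₁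
              exact normalize_E B hsymm r hr2 Y₁ x₀ hY₁kill (hrall x₀) b1 a hbe
                hBY₁Y₁ hsymm' hBxx
            · exact Or.inr ⟨normalize_F B hsymm r hr2 x₀ Y₁ (hrall x₀) hY₁kill a b1
                (by omega) (by omega) hBxx hBxY₁ hBY₁Y₁, hr2⟩
      have hm4 : 2 ≤ 2^r * 2^r := by nlinarith [hn1]
      rcases hEF with ⟨e₁, e₂, he₁, he₂, h11, h12, h22⟩ | ⟨⟨e₁, e₂, he₁, he₂, h11, h12, h22⟩, hr2⟩
      · obtain ⟨K, g, hform, horth, hcardK⟩ := split_rank2 B hsymm (2^r) hn1 e₁ e₂ he₁ he₂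
          0 1 0 (-1) h11 h12 h22 (by rw [hcast]; norm_num)
        have hKdec := recurse K horth (hcardbound K (2^r * 2^r) hm4 hcardK)
        exact decomp_step_rank2 (K := ↥K) (fun x y => B x y) (fun z w => B (z:D) (w:D)) r
          (0, 1, 0) (Or.inl ⟨rfl, hr1⟩) g hform hKdec
      · obtain ⟨d', hd'odd, hd'⟩ := odd_inv 3 rfl r
        obtain ⟨K, g, hform, horth, hcardK⟩ := split_rank2 B hsymm (2^r) hn1 e₁ e₂ he₁ he₂
          2 1 2 d' h11 h12 h22 (by
            rw [hcast]
            have h3 : ((2:ℤ)*2 - 1^2) = 3 := by norm_num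
            rw [h3]
            exact hd')
        have hKdec := recurse K horth (hcardbound K (2^r * 2^r) hm4 hcardK)
        exact decomp_step_rank2 (K := ↥K) (fun x y => B x y) (fun z w => B (z:D) (w:D)) r
          (2, 1, 2) (Or.inr ⟨rfl, hr2⟩) g hform hKdec



/-- (Wall) Every nondegenerate symmetric biadditive form on a finite abelian 2-group
is isomorphic to a finite orthogonal direct sum of the forms
`A_{2^r} = (ℤ/2^r, xy/2^r)` (`r ≥ 1`), `B_{2^r} = (ℤ/2^r, -xy/2^r)` (`r ≥ 2`),
`C_{2^r} = (ℤ/2^r, 5xy/2^r)` (`r ≥ 3`), `D_{2^r} = (ℤ/2^r, -5xy/2^r)` (`r ≥ 3`),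
`E_{2^r} = ((ℤ/2^r)², (x₁y₂+x₂y₁)/2^r)` (`r ≥ 1`) and
`F_{2^r} = ((ℤ/2^r)², (2x₁y₁+x₁y₂+x₂y₁+2x₂y₂)/2^r)` (`r ≥ 2`). -/
theorem form_on_two_group_decomposes
    {D : Type*} [AddCommGroup D] [Fintype D]
    (hD : ∀ x : D, ∃ k : ℕ, 2 ^ k • x = 0)
    (b : D → D → AddCircle (1:ℚ))
    (hsymm : ∀ x y : D, b x y = b y x)
    (hadd : ∀ x y z : D, b (x + y) z = b x z + b y z)
    (hnd : ∀ x : D, (∀ y : D, b x y = 0) → x = 0) :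
    ∃ (k l : ℕ) (r : Fin k → ℕ) (a : Fin k → ℤ) (s : Fin l → ℕ) (c : Fin l → ℤ × ℤ × ℤ),
      (∀ i, (a i = 1 ∧ 1 ≤ r i) ∨ (a i = -1 ∧ 2 ≤ r i) ∨
            (a i = 5 ∧ 3 ≤ r i) ∨ (a i = -5 ∧ 3 ≤ r i)) ∧
      (∀ j, (c j = (0, 1, 0) ∧ 1 ≤ s j) ∨ (c j = (2, 1, 2) ∧ 2 ≤ s j)) ∧
      ∃ f : D ≃+ ((∀ i : Fin k, ZMod (2 ^ r i)) ×
                  (∀ j : Fin l, ZMod (2 ^ s j) × ZMod (2 ^ s j))),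
        ∀ x y : D,
          (∑ i, cycForm (2 ^ r i) (a i) ((f x).1 i) ((f y).1 i)) +
          (∑ j, rankTwoForm (2 ^ s j) (c j) ((f x).2 j) ((f y).2 j)) = b x y := by
  have haddsnd : ∀ x y z : D, b x (y + z) = b x y + b x z := by
    intro x y z
    rw [hsymm, hadd, hsymm y x, hsymm z x]
  set B : D →+ D →+ AddCircle (1:ℚ) := AddMonoidHom.mk'
    (fun x => AddMonoidHom.mk' (b x) (fun y z => haddsnd x y z))
    (by
      intro x y
      ext z
      exact hadd x y z) with hBdef
  exact main_aux (Fintype.card D) D le_rfl B (fun x y => hsymm x y) hD hnd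
end

section
/- Let p be an odd prime, r ≥ 1, and let θ be an integer that is a quadratic nonresidue modulo p. Then on (ℤ/p^r)², the finite bilinear form b(x,y) = (x₁y₁ + x₂y₂)/p^r mod ℤ is isomorphic to the finite bilinear form b'(x,y) = θ(x₁y₁ + x₂y₂)/p^r mod ℤ (the relation 2X_{p^r} = 2Y_{p^r}). -/
/-- The form `b(x,y) = a·(x₁y₁ + x₂y₂)/m mod ℤ` on `(ℤ/m)²`, computed via the
canonical integer representatives. -/
noncomputable def scaledPairForm (m : ℕ) (a : ℤ) (x y : ZMod m × ZMod m) :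
    AddCircle (1:ℚ) :=
  ((((a * ((x.1.val : ℤ) * (y.1.val : ℤ) + (x.2.val : ℤ) * (y.2.val : ℤ)) : ℤ) : ℚ) /
      (m : ℚ) : ℚ) : AddCircle (1:ℚ))

noncomputable def toCircle (m : ℕ) (z : ZMod m) : AddCircle (1:ℚ) :=
  (((z.val : ℚ) / (m : ℚ) : ℚ) : AddCircle (1:ℚ))

lemma intCast_div_toCircle (m : ℕ) [NeZero m] (n : ℤ) :
    (((n : ℚ) / (m : ℚ) : ℚ) : AddCircle (1:ℚ)) = toCircle m (n : ZMod m) := by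
  have hm : (m : ℚ) ≠ 0 := Nat.cast_ne_zero.mpr (NeZero.ne m)
  have hdvd : (m : ℤ) ∣ n - (((n : ZMod m)).val : ℤ) := by
    rw [← ZMod.intCast_zmod_eq_zero_iff_dvd]
    push_cast
    simp [ZMod.natCast_val, ZMod.intCast_cast, ZMod.cast_id]
  obtain ⟨k, hk⟩ := hdvd
  unfold toCircle
  rw [QuotientAddGroup.eq]
  rw [AddSubgroup.mem_zmultiples_iff]
  refine ⟨-k, ?_⟩
  have hk' : (n : ℚ) - (((n : ZMod m)).val : ℚ) = (m : ℚ) * k := by exact_mod_cast congrArg (Int.cast : ℤ → ℚ) hk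
  have hv : (((n : ZMod m)).val : ℚ) = (n : ℚ) - (m : ℚ) * k := by linarith [hk']
  rw [zsmul_eq_mul, mul_one, hv]
  field_simp
  push_cast
  ring

lemma scaledPairForm_eq (m : ℕ) [NeZero m] (a : ℤ) (x y : ZMod m × ZMod m) :
    scaledPairForm m a x y
      = toCircle m ((a : ZMod m) * (x.1 * y.1 + x.2 * y.2)) := by
  unfold scaledPairForm
  rw [intCast_div_toCircle]
  congr 1
  push_cast [ZMod.natCast_val, ZMod.intCast_cast, ZMod.cast_id]
  ring

lemma isUnit_of_map_ne_zero {p : ℕ} (hp : p.Prime) {r : ℕ} (hr : 1 ≤ r)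
    (x : ZMod (p ^ r)) (hx : ZMod.castHom (dvd_pow_self p (by omega : r ≠ 0)) (ZMod p) x ≠ 0) :
    IsUnit x := by
  haveI : Fact p.Prime := ⟨hp⟩
  haveI : NeZero (p ^ r) := ⟨pow_ne_zero r hp.pos.ne'⟩
  have hxval : ((x.val : ℕ) : ZMod (p ^ r)) = x := by
    simp [ZMod.natCast_val, ZMod.cast_id]
  rw [← hxval, ZMod.isUnit_iff_coprime]
  refine Nat.Coprime.pow_right r ?_
  rw [Nat.coprime_comm, hp.coprime_iff_not_dvd]
  intro hdvd
  apply hx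
  have : ZMod.castHom (dvd_pow_self p (by omega : r ≠ 0)) (ZMod p) x = ((x.val : ℕ) : ZMod p) := by
    simp [ZMod.castHom_apply, ZMod.natCast_val]
  rw [this, ZMod.natCast_eq_zero_iff]
  exact hdvd

lemma isSquare_lift {p : ℕ} (hp : p.Prime) (hodd : Odd p) {r : ℕ} (hr : 1 ≤ r)
    (v : (ZMod (p ^ r))ˣ)
    (hv : IsSquare (ZMod.unitsMap (dvd_pow_self p (by omega : r ≠ 0)) v)) :
    IsSquare v := by
  haveI : Fact p.Prime := ⟨hp⟩
  haveI : NeZero (p ^ r) := ⟨pow_ne_zero r hp.pos.ne'⟩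
  set π := ZMod.unitsMap (dvd_pow_self p (by omega : r ≠ 0)) with hπ
  have hsurj : Function.Surjective π := ZMod.unitsMap_surjective _
  -- cardinality of the kernel
  have hcardG : Nat.card (ZMod (p ^ r))ˣ = p ^ (r - 1) * (p - 1) := by
    rw [Nat.card_eq_fintype_card, ZMod.card_units_eq_totient,
      Nat.totient_prime_pow hp (by omega : 0 < r)]
  have hcardQ : Nat.card ((ZMod (p ^ r))ˣ ⧸ π.ker) = p - 1 := by
    rw [Nat.card_congr (QuotientGroup.quotientKerEquivOfSurjective π hsurj).toEquiv]
    rw [Nat.card_eq_fintype_card, ZMod.card_units_eq_totient, Nat.totient_prime hp]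
  have hcardker : Nat.card π.ker = p ^ (r - 1) := by
    have h := Subgroup.card_eq_card_quotient_mul_card_subgroup π.ker
    rw [hcardG, hcardQ] at h
    have hp1 : 0 < p - 1 := by have := hp.two_le; omega
    rw [mul_comm (p - 1)] at h
    exact (Nat.eq_of_mul_eq_mul_right hp1 h.symm)
  obtain ⟨s, hs⟩ := hv
  obtain ⟨w, hw⟩ := hsurj s
  set k := v * (w * w)⁻¹ with hkdef
  have hk : k ∈ π.ker := by
    rw [MonoidHom.mem_ker]
    simp only [hkdef, map_mul, map_inv, hw]
    rw [← hs]
    group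
  have hkpow : k ^ (p ^ (r - 1)) = 1 := by
    have := pow_card_eq_one' (x := (⟨k, hk⟩ : π.ker))
    rw [hcardker] at this
    have := congrArg (Subtype.val) this
    simpa using this
  obtain ⟨t, ht⟩ := hodd.pow (n := r - 1)
  refine ⟨k ^ (t + 1) * w, ?_⟩
  have hv' : v = k * (w * w) := by rw [hkdef]; group
  have hk1 : k ^ (2 * t + 1) = 1 := by rw [← ht]; exact hkpow
  calc v = k * (w * w) := hv'
    _ = (k ^ (2 * t + 1) * k) * (w * w) := by rw [hk1, one_mul]
    _ = (k ^ (t + 1) * k ^ (t + 1)) * (w * w) := by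
          rw [← pow_succ, ← pow_add]; congr 2; omega
    _ = k ^ (t + 1) * w * (k ^ (t + 1) * w) := mul_mul_mul_comm _ _ _ _

lemma exists_sum_sq_aux {p : ℕ} (hp : p.Prime) (hodd : Odd p) {r : ℕ} (hr : 1 ≤ r)
    (θ : ℤ) (hθ0 : (θ : ZMod p) ≠ 0)
    (a₀ b₀ : ZMod p) (ha₀ : a₀ ≠ 0) (hab : a₀ ^ 2 + b₀ ^ 2 = (θ : ZMod p)⁻¹) :
    ∃ a b : ZMod (p ^ r), (θ : ZMod (p ^ r)) * (a ^ 2 + b ^ 2) = 1 := by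
  haveI : Fact p.Prime := ⟨hp⟩
  haveI : NeZero (p ^ r) := ⟨pow_ne_zero r hp.pos.ne'⟩
  set π := ZMod.castHom (dvd_pow_self p (by omega : r ≠ 0)) (ZMod p) with hπ
  -- θ is a unit mod p^r
  have hθu : IsUnit ((θ : ZMod (p ^ r))) := by
    apply isUnit_of_map_ne_zero hp hr
    rwa [map_intCast]
  obtain ⟨vθ, hvθ⟩ := hθu
  -- lift b₀
  set b : ZMod (p ^ r) := ((b₀.val : ℕ) : ZMod (p ^ r)) with hbdef
  have hπb : π b = b₀ := by
    simp [hbdef, ZMod.natCast_val, ZMod.cast_id]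
  -- the element w := vθ⁻¹ - b^2 is a unit which is a square mod p
  have hπθinv : π ((vθ⁻¹ : (ZMod (p ^ r))ˣ) : ZMod (p ^ r)) = (θ : ZMod p)⁻¹ := by
    apply eq_inv_of_mul_eq_one_left
    rw [← map_intCast π θ, ← map_mul, ← hvθ, Units.inv_mul, map_one]
  set w : ZMod (p ^ r) := ((vθ⁻¹ : (ZMod (p ^ r))ˣ) : ZMod (p ^ r)) - b ^ 2 with hwdef
  have hπw : π w = a₀ ^ 2 := by
    rw [hwdef, map_sub, map_pow, hπb, hπθinv, ← hab]
    ring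
  have hwu : IsUnit w := by
    apply isUnit_of_map_ne_zero hp hr
    rw [hπw]
    exact pow_ne_zero 2 ha₀
  obtain ⟨vw, hvw⟩ := hwu
  -- vw is a square mod p, lift
  have hsq : IsSquare (ZMod.unitsMap (dvd_pow_self p (by omega : r ≠ 0)) vw) := by
    have ha₀u : IsUnit a₀ := ha₀.isUnit
    obtain ⟨ua, hua⟩ := ha₀u
    refine ⟨ua, Units.ext ?_⟩
    have : ((ZMod.unitsMap (dvd_pow_self p (by omega : r ≠ 0)) vw : (ZMod p)ˣ) : ZMod p)
        = π (vw : ZMod (p ^ r)) := by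
      rw [ZMod.unitsMap_def]
      rfl
    rw [this, hvw, hπw]
    push_cast [hua]
    ring
  obtain ⟨s, hs⟩ := isSquare_lift hp hodd hr vw hsq
  refine ⟨(s : ZMod (p ^ r)), b, ?_⟩
  have hw' : ((s : ZMod (p ^ r))) ^ 2 + b ^ 2 = ((vθ⁻¹ : (ZMod (p ^ r))ˣ) : ZMod (p ^ r)) := by
    have : ((s : ZMod (p ^ r))) ^ 2 = w := by
      rw [← hvw, hs]; push_cast; ring
    rw [this, hwdef]; ring
  rw [hw', ← hvθ, Units.mul_inv]

lemma exists_sum_sq {p : ℕ} (hp : p.Prime) (hodd : Odd p) {r : ℕ} (hr : 1 ≤ r)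
    (θ : ℤ) (hθ : ∀ l : ZMod p, l ^ 2 ≠ (θ : ZMod p)) :
    ∃ a b : ZMod (p ^ r), (θ : ZMod (p ^ r)) * (a ^ 2 + b ^ 2) = 1 := by
  haveI : Fact p.Prime := ⟨hp⟩
  have hθ0 : (θ : ZMod p) ≠ 0 := by
    intro h
    exact hθ 0 (by simp [h])
  obtain ⟨a₀, b₀, hab⟩ := ZMod.sq_add_sq p ((θ : ZMod p)⁻¹)
  have hne : a₀ ≠ 0 ∨ b₀ ≠ 0 := by
    by_contra h
    push_neg at h
    rw [h.1, h.2] at hab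
    simp at hab
    exact hθ0 hab.symm
  rcases hne with h | h
  · exact exists_sum_sq_aux hp hodd hr θ hθ0 a₀ b₀ h hab
  · exact exists_sum_sq_aux hp hodd hr θ hθ0 b₀ a₀ h (by rw [← hab]; ring)

set_option maxHeartbeats 1000000 in
/-- The relation `2X_{p^r} = 2Y_{p^r}`: for an odd prime `p`, `r ≥ 1` and a quadratic
nonresidue `θ` modulo `p`, the form `(x₁y₁+x₂y₂)/p^r` on `(ℤ/p^r)²` is isomorphic to
`θ(x₁y₁+x₂y₂)/p^r`. -/
theorem two_X_eq_two_Y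
    {p : ℕ} (hp : p.Prime) (hodd : Odd p) (r : ℕ) (hr : 1 ≤ r)
    (θ : ℤ) (hθ : ∀ l : ZMod p, l ^ 2 ≠ (θ : ZMod p)) :
    ∃ f : (ZMod (p ^ r) × ZMod (p ^ r)) ≃+ (ZMod (p ^ r) × ZMod (p ^ r)),
      ∀ x y : ZMod (p ^ r) × ZMod (p ^ r),
        scaledPairForm (p ^ r) θ (f x) (f y) = scaledPairForm (p ^ r) 1 x y := by
  haveI : Fact p.Prime := ⟨hp⟩
  haveI : NeZero (p ^ r) := ⟨pow_ne_zero r hp.pos.ne'⟩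
  obtain ⟨a, b, h⟩ := exists_sum_sq hp hodd hr θ hθ
  set θ' : ZMod (p ^ r) := (θ : ZMod (p ^ r)) with hθ'
  refine ⟨{
    toFun := fun x => (a * x.1 + b * x.2, -b * x.1 + a * x.2)
    invFun := fun x => (θ' * (a * x.1 - b * x.2), θ' * (b * x.1 + a * x.2))
    left_inv := ?_
    right_inv := ?_
    map_add' := ?_ }, ?_⟩
  · intro x
    refine Prod.ext ?_ ?_ <;> simp only
    · linear_combination x.1 * h
    · linear_combination x.2 * h
  · intro x
    refine Prod.ext ?_ ?_ <;> simp only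
    · linear_combination x.1 * h
    · linear_combination x.2 * h
  · intro x y
    refine Prod.ext ?_ ?_ <;> simp only [Prod.fst_add, Prod.snd_add] <;> ring
  · intro x y
    rw [scaledPairForm_eq, scaledPairForm_eq]
    congr 1
    simp only [AddEquiv.coe_mk, Equiv.coe_fn_mk]
    push_cast
    linear_combination (x.1 * y.1 + x.2 * y.2) * h
end

section
/- Let p be an odd prime and k ≥ 1. The finite bilinear form on (ℤ/p^k)^4 given by b(x,y) = (x₁y₁ + x₂y₂ + x₃y₃ + x₄y₄)/p^k mod ℤ is split: there exists a subgroup H of (ℤ/p^k)^4 with H^⊥ = H. -/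
open scoped BigOperators

lemma diagFormFour_eq_zero_iff {m : ℕ} (hm : 0 < m) (x y : Fin 4 → ZMod m) :
    diagFormFour m x y = 0 ↔ ∑ i : Fin 4, x i * y i = 0 := by
  haveI : NeZero m := ⟨hm.ne'⟩
  have hm' : (m : ℚ) ≠ 0 := by exact_mod_cast hm.ne'
  set S : ℤ := ∑ i : Fin 4, ((x i).val * (y i).val : ℤ) with hS
  have hsum : (∑ i : Fin 4, (((x i).val * (y i).val : ℤ) : ℚ)) = (S : ℚ) := by
    rw [hS]; push_cast; ring
  have h1 : diagFormFour m x y = 0 ↔ (m : ℤ) ∣ S := by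
    unfold diagFormFour
    rw [hsum, AddCircle.coe_eq_zero_iff]
    constructor
    · rintro ⟨n, hn⟩
      simp only [zsmul_eq_mul, mul_one] at hn
      rw [eq_div_iff hm'] at hn
      refine ⟨n, ?_⟩
      have : (S : ℚ) = ((m * n : ℤ) : ℚ) := by push_cast; linarith [hn]
      exact_mod_cast this
    · rintro ⟨n, hn⟩
      refine ⟨n, ?_⟩
      simp only [zsmul_eq_mul, mul_one]
      rw [eq_div_iff hm', show ((S:ℚ)) = (m:ℚ) * n by exact_mod_cast congrArg (fun z : ℤ => (z:ℚ)) hn]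
      ring
  have h2 : ((S : ℤ) : ZMod m) = ∑ i : Fin 4, x i * y i := by
    rw [hS]
    push_cast
    simp [ZMod.natCast_val, ZMod.cast_id]
  rw [h1, ← ZMod.intCast_zmod_eq_zero_iff_dvd, h2]

lemma exists_sq_add_sq_int {p : ℕ} (hp : p.Prime) (hodd : Odd p) :
    ∀ k : ℕ, 1 ≤ k → ∃ a b : ℤ, ((p:ℤ) ^ k ∣ a ^ 2 + b ^ 2 + 1) ∧ ¬ (p:ℤ) ∣ a := by
  haveI : Fact p.Prime := ⟨hp⟩
  intro k hk
  induction k with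
  | zero => omega
  | succ k ih =>
    rcases Nat.eq_zero_or_pos k with hk0 | hk1
    · subst hk0
      obtain ⟨a, b, hab⟩ := ZMod.sq_add_sq p (-1)
      have key : ∀ a b : ZMod p, a ^ 2 + b ^ 2 = -1 → a ≠ 0 →
          ∃ a' b' : ℤ, ((p:ℤ) ^ 1 ∣ a' ^ 2 + b' ^ 2 + 1) ∧ ¬ (p:ℤ) ∣ a' := by
        intro a b hab ha
        refine ⟨(a.val : ℤ), (b.val : ℤ), ?_, ?_⟩
        · rw [pow_one, ← ZMod.intCast_zmod_eq_zero_iff_dvd]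
          push_cast
          simp [ZMod.natCast_val, ZMod.cast_id, hab]
        · intro h
          apply ha
          have h0 := (ZMod.intCast_zmod_eq_zero_iff_dvd _ p).mpr h
          push_cast at h0
          simpa [ZMod.natCast_val, ZMod.cast_id] using h0
      by_cases ha : a = 0
      · have hb : b ≠ 0 := by
          intro hb
          rw [ha, hb] at hab
          have h1 : (1 : ZMod p) = 0 := by linear_combination hab
          exact one_ne_zero h1
        exact key b a (by rw [← hab]; ring) hb
      · exact key a b hab ha
    · obtain ⟨a, b, ⟨c, hc⟩, ha⟩ := ih hk1
      set A : ZMod p := ((a : ℤ) : ZMod p) with hA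
      set C : ZMod p := ((c : ℤ) : ZMod p) with hC
      have h2A : (2 : ZMod p) * A ≠ 0 := by
        intro h
        have h' : ((2 * a : ℤ) : ZMod p) = 0 := by push_cast; rw [← hA]; exact h
        rw [ZMod.intCast_zmod_eq_zero_iff_dvd] at h'
        rcases (Int.Prime.dvd_mul' (by exact_mod_cast hp) h') with h2 | h2
        · have hp2 : p ∣ 2 := by exact_mod_cast h2
          have := (Nat.prime_dvd_prime_iff_eq hp Nat.prime_two).mp hp2
          rw [this] at hodd
          exact absurd hodd (by decide)
        · exact ha h2
      set u : ZMod p := -C * ((2 : ZMod p) * A)⁻¹ with hu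
      set t : ℤ := (u.val : ℤ) with ht
      have htu : ((t : ℤ) : ZMod p) = u := by
        rw [ht]; push_cast; simp [ZMod.natCast_val, ZMod.cast_id]
      have hdvd : (p:ℤ) ∣ c + 2 * a * t := by
        rw [← ZMod.intCast_zmod_eq_zero_iff_dvd]
        push_cast
        rw [← hA, ← hC, htu, hu]
        field_simp
        rw [div_self h2A]
        ring
      obtain ⟨d, hd⟩ := hdvd
      refine ⟨a + t * (p:ℤ) ^ k, b, ?_, ?_⟩
      · have hring : (a + t * (p:ℤ) ^ k) ^ 2 + b ^ 2 + 1
            = (p:ℤ) ^ k * (c + 2 * a * t) + t ^ 2 * ((p:ℤ) ^ k) ^ 2 := by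
          linear_combination hc
        rw [hring, hd]
        have h1 : (p:ℤ) ^ (k+1) ∣ (p:ℤ) ^ k * ((p:ℤ) * d) := ⟨d, by ring⟩
        have h2 : (p:ℤ) ^ (k+1) ∣ t ^ 2 * ((p:ℤ) ^ k) ^ 2 := by
          refine Dvd.dvd.mul_left ?_ _
          rw [← pow_mul]
          exact pow_dvd_pow _ (by omega)
        exact dvd_add h1 h2
      · intro hdvd'
        apply ha
        have hpt : (p:ℤ) ∣ t * (p:ℤ) ^ k := Dvd.dvd.mul_left (dvd_pow_self _ hk1.ne') _
        simpa using dvd_sub hdvd' hpt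

/-- For an odd prime `p` and `k ≥ 1`, the form `(x₁y₁+x₂y₂+x₃y₃+x₄y₄)/p^k` on
`(ℤ/p^k)⁴` is split: there is a subgroup `H` with `H^⊥ = H`. -/
theorem fourX_pk_is_split {p : ℕ} (hp : p.Prime) (hodd : Odd p) (k : ℕ) (hk : 1 ≤ k) :
    ∃ H : AddSubgroup (Fin 4 → ZMod (p ^ k)),
      ∀ z : Fin 4 → ZMod (p ^ k),
        (∀ h ∈ H, diagFormFour (p ^ k) z h = 0) ↔ z ∈ H := by
  have hm : 0 < p ^ k := pow_pos hp.pos k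
  obtain ⟨a, b, hdvd, -⟩ := exists_sq_add_sq_int hp hodd k hk
  set A : ZMod (p ^ k) := ((a : ℤ) : ZMod (p ^ k)) with hA
  set B : ZMod (p ^ k) := ((b : ℤ) : ZMod (p ^ k)) with hB
  have hAB : A ^ 2 + B ^ 2 = -1 := by
    have h0 : ((a ^ 2 + b ^ 2 + 1 : ℤ) : ZMod (p ^ k)) = 0 := by
      rw [ZMod.intCast_zmod_eq_zero_iff_dvd]
      exact_mod_cast hdvd
    push_cast at h0
    rw [← hA, ← hB] at h0
    linear_combination h0
  refine ⟨{
    carrier := {z | z 2 = A * z 0 + B * z 1 ∧ z 3 = B * z 0 - A * z 1}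
    zero_mem' := by simp
    add_mem' := by
      rintro x y ⟨hx1, hx2⟩ ⟨hy1, hy2⟩
      constructor <;> simp only [Pi.add_apply, hx1, hx2, hy1, hy2] <;> ring
    neg_mem' := by
      rintro x ⟨hx1, hx2⟩
      constructor <;> simp only [Pi.neg_apply, hx1, hx2] <;> ring }, ?_⟩
  intro z
  simp only [AddSubgroup.mem_mk, Set.mem_setOf_eq]
  constructor
  · intro hz
    have hv1 : (![1, 0, A, B] : Fin 4 → ZMod (p ^ k)) ∈
        ({z | z 2 = A * z 0 + B * z 1 ∧ z 3 = B * z 0 - A * z 1} :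
          Set (Fin 4 → ZMod (p ^ k))) := by
      constructor <;> simp
    have hv2 : (![0, 1, B, -A] : Fin 4 → ZMod (p ^ k)) ∈
        ({z | z 2 = A * z 0 + B * z 1 ∧ z 3 = B * z 0 - A * z 1} :
          Set (Fin 4 → ZMod (p ^ k))) := by
      constructor <;> simp
    have e1 := (diagFormFour_eq_zero_iff hm z _).mp (hz _ hv1)
    have e2 := (diagFormFour_eq_zero_iff hm z _).mp (hz _ hv2)
    rw [Fin.sum_univ_four] at e1 e2
    simp only [Matrix.cons_val_zero, Matrix.cons_val_one, Matrix.head_cons,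
      Matrix.cons_val_two, Matrix.tail_cons, Matrix.cons_val_three,
      mul_one, mul_zero, mul_neg, add_zero, zero_add] at e1 e2
    constructor
    · linear_combination (-A) * e1 + (-B) * e2 + (z 2) * hAB
    · linear_combination (-B) * e1 + A * e2 + (z 3) * hAB
  · rintro ⟨hz1, hz2⟩ h ⟨hh1, hh2⟩
    rw [diagFormFour_eq_zero_iff hm, Fin.sum_univ_four, hz1, hz2, hh1, hh2]
    linear_combination (z 0 * h 0 + z 1 * h 1) * hAB
end

section
/- For every integer r ≥ 2 and every odd integer a, the quadratic Gauss sum satisfies Σ_{n=0}^{2^r − 1} exp(2πi·a·n²/2^{r+1}) = 2^{r/2} · exp((2πi/8)·((a² − 1)(r + 2)/2 + a)), where 2^{r/2} denotes the positive real square root of 2^r. -/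
open scoped BigOperators

open Complex Finset


noncomputable def ee (x : ℂ) : ℂ := Complex.exp (2 * Real.pi * Complex.I * x)

lemma ee_add (x y : ℂ) : ee (x + y) = ee x * ee y := by
  simp [ee, mul_add, Complex.exp_add]

lemma ee_int (n : ℤ) : ee (n : ℂ) = 1 := by
  rw [ee, mul_comm]; exact Complex.exp_int_mul_two_pi_mul_I n

lemma ee_add_int (x : ℂ) (n : ℤ) : ee (x + (n : ℂ)) = ee x := by
  rw [ee_add, ee_int, mul_one]

lemma ee_zero : ee 0 = 1 := by simp [ee]

lemma ee_half (k : ℤ) (hk : Odd k) : ee ((k : ℂ) / 2) = -1 := by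
  have : (2 : ℂ) * Real.pi * Complex.I * ((k : ℂ)/2) = (k : ℂ) * (Real.pi * Complex.I) := by
    ring
  rw [ee, this, Complex.exp_int_mul, Complex.exp_pi_mul_I]
  exact Odd.neg_one_zpow hk

lemma ee_quarter : ee (1/4) = Complex.I := by
  have h : (2 : ℂ) * Real.pi * Complex.I * (1/4) = (Real.pi/2 : ℝ) * Complex.I := by
    push_cast; ring
  rw [ee, h, Complex.exp_mul_I]
  simp [Complex.cos_ofReal_re, ← Complex.ofReal_cos, ← Complex.ofReal_sin,
    Real.cos_pi_div_two, Real.sin_pi_div_two]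

lemma ee_three_quarter : ee (3/4) = -Complex.I := by
  have h : (3 : ℂ)/4 = (-1)/4 + ((1 : ℤ) : ℂ) := by push_cast; ring
  have h2 : (2 : ℂ) * Real.pi * Complex.I * ((-1)/4) = (-(Real.pi/2) : ℝ) * Complex.I := by
    push_cast; ring
  rw [h, ee_add_int, ee, h2, Complex.exp_mul_I]
  simp [← Complex.ofReal_cos, ← Complex.ofReal_sin, Real.cos_pi_div_two, Real.sin_pi_div_two]

lemma sqrt_two_sq : ((Real.sqrt 2 : ℝ) : ℂ) * ((Real.sqrt 2 : ℝ) : ℂ) = 2 := by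
  rw [← Complex.ofReal_mul, Real.mul_self_sqrt (by norm_num : (0:ℝ) ≤ 2)]
  norm_num

lemma one_add_I : 1 + Complex.I = (Real.sqrt 2 : ℂ) * ee (1/8) := by
  have h : (2 : ℂ) * Real.pi * Complex.I * (1/8) = (Real.pi/4 : ℝ) * Complex.I := by
    push_cast; ring
  rw [ee, h, Complex.exp_mul_I, ← Complex.ofReal_cos, ← Complex.ofReal_sin,
    Real.cos_pi_div_four, Real.sin_pi_div_four]
  push_cast
  linear_combination (-(1 + Complex.I)/2) * sqrt_two_sq

lemma one_sub_I : 1 - Complex.I = (Real.sqrt 2 : ℂ) * ee (7/8) := by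
  have h : (7 : ℂ)/8 = (-1)/8 + ((1 : ℤ) : ℂ) := by push_cast; ring
  have h2 : (2 : ℂ) * Real.pi * Complex.I * ((-1)/8) = (-(Real.pi/4) : ℝ) * Complex.I := by
    push_cast; ring
  rw [h, ee_add_int, ee, h2, Complex.exp_mul_I, ← Complex.ofReal_cos, ← Complex.ofReal_sin,
    Real.cos_neg, Real.sin_neg, Real.cos_pi_div_four, Real.sin_pi_div_four]
  push_cast
  linear_combination (-(1 - Complex.I)/2) * sqrt_two_sq

lemma key_eighth (a : ℤ) (ha : Odd a) :
    1 + ee ((a:ℂ)/4) = (Real.sqrt 2 : ℂ) * ee (((a:ℂ)^2 + 2*a - 1)/16) := by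
  have h2 : a % 2 = 1 := Int.odd_iff.mp ha
  obtain ⟨m, s, hs, rfl⟩ : ∃ m s : ℤ, (s = 1 ∨ s = 3 ∨ s = 5 ∨ s = 7) ∧ a = 8*m + s :=
    ⟨a / 8, a % 8, by omega, by omega⟩
  rcases hs with rfl | rfl | rfl | rfl
  · have hL : ((8*m+1 : ℤ):ℂ)/4 = 1/4 + ((2*m : ℤ):ℂ) := by push_cast; ring
    have hR : (((8*m+1:ℤ):ℂ)^2 + 2*((8*m+1:ℤ):ℂ) - 1)/16
        = 1/8 + ((4*m^2 + 2*m : ℤ):ℂ) := by push_cast; ring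
    rw [hL, hR, ee_add_int, ee_add_int, ee_quarter]; exact one_add_I
  · have hL : ((8*m+3 : ℤ):ℂ)/4 = 3/4 + ((2*m : ℤ):ℂ) := by push_cast; ring
    have hR : (((8*m+3:ℤ):ℂ)^2 + 2*((8*m+3:ℤ):ℂ) - 1)/16
        = 7/8 + ((4*m^2 + 4*m : ℤ):ℂ) := by push_cast; ring
    rw [hL, hR, ee_add_int, ee_add_int, ee_three_quarter]
    exact one_sub_I
  · have hL : ((8*m+5 : ℤ):ℂ)/4 = 1/4 + ((2*m+1 : ℤ):ℂ) := by push_cast; ring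
    have hR : (((8*m+5:ℤ):ℂ)^2 + 2*((8*m+5:ℤ):ℂ) - 1)/16
        = 1/8 + ((4*m^2 + 6*m + 2 : ℤ):ℂ) := by push_cast; ring
    rw [hL, hR, ee_add_int, ee_add_int, ee_quarter]; exact one_add_I
  · have hL : ((8*m+7 : ℤ):ℂ)/4 = 3/4 + ((2*m+1 : ℤ):ℂ) := by push_cast; ring
    have hR : (((8*m+7:ℤ):ℂ)^2 + 2*((8*m+7:ℤ):ℂ) - 1)/16
        = 7/8 + ((4*m^2 + 8*m + 3 : ℤ):ℂ) := by push_cast; ring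
    rw [hL, hR, ee_add_int, ee_add_int, ee_three_quarter]
    exact one_sub_I

noncomputable def S (a : ℤ) (r : ℕ) : ℂ :=
  ∑ n ∈ Finset.range (2 ^ r), ee ((a : ℂ) * (n : ℂ)^2 / (2:ℂ)^(r+1))

lemma double (a : ℤ) (m : ℕ) :
    ∑ n ∈ Finset.range (2 ^ (m+2)), ee ((a : ℂ) * (n : ℂ)^2 / (2:ℂ)^(m+2))
      = 2 * ∑ n ∈ Finset.range (2 ^ (m+1)), ee ((a : ℂ) * (n : ℂ)^2 / (2:ℂ)^(m+2)) := by
  have hsplit : (2:ℕ) ^ (m+2) = 2^(m+1) + 2^(m+1) := by ring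
  rw [hsplit, Finset.sum_range_add, two_mul]
  congr 1
  refine Finset.sum_congr rfl fun i _ => ?_
  have h2 : ((2:ℂ)^(m+2)) ≠ 0 := pow_ne_zero _ two_ne_zero
  have harg : (a : ℂ) * ((2^(m+1) + i : ℕ) : ℂ)^2 / (2:ℂ)^(m+2)
      = (a : ℂ) * (i : ℂ)^2 / (2:ℂ)^(m+2) + ((a * i + a * 2^m : ℤ) : ℂ) := by
    push_cast
    field_simp
    ring
  rw [harg, ee_add_int]

lemma even_odd_split (N : ℕ) (g : ℕ → ℂ) :
    ∑ n ∈ Finset.range (2*N), g n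
      = ∑ m ∈ Finset.range N, g (2*m) + ∑ m ∈ Finset.range N, g (2*m+1) := by
  induction N with
  | zero => simp
  | succ n ih =>
    have h : 2*(n+1) = (2*n) + 1 + 1 := by ring
    rw [h, Finset.sum_range_succ, Finset.sum_range_succ, ih,
      Finset.sum_range_succ, Finset.sum_range_succ]
    ring

lemma odd_part_zero (a : ℤ) (ha : Odd a) (r : ℕ) :
    ∑ m ∈ Finset.range (2 ^ (r+3)), ee ((a : ℂ) * ((2*m+1 : ℕ) : ℂ)^2 / (2:ℂ)^(r+5)) = 0 := by
  have hsplit : (2:ℕ) ^ (r+3) = 2^(r+2) + 2^(r+2) := by ring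
  rw [hsplit, Finset.sum_range_add]
  have : ∀ i ∈ Finset.range (2^(r+2)),
      ee ((a : ℂ) * ((2*(2^(r+2) + i)+1 : ℕ) : ℂ)^2 / (2:ℂ)^(r+5))
        = - ee ((a : ℂ) * ((2*i+1 : ℕ) : ℂ)^2 / (2:ℂ)^(r+5)) := by
    intro i _
    have h2 : ((2:ℂ)^(r+5)) ≠ 0 := pow_ne_zero _ two_ne_zero
    have harg : (a : ℂ) * ((2*(2^(r+2) + i)+1 : ℕ) : ℂ)^2 / (2:ℂ)^(r+5)
        = (a : ℂ) * ((2*i+1 : ℕ) : ℂ)^2 / (2:ℂ)^(r+5)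
          + ((a * (2*i+1) : ℤ) : ℂ)/2 + ((a * 2^(r+1) : ℤ) : ℂ) := by
      push_cast
      field_simp
      ring
    rw [harg, ee_add_int, ee_add, ee_half (a * (2*i+1)) (ha.mul (by exact ⟨i, by ring⟩)),
      mul_neg_one]
  rw [Finset.sum_congr rfl this]
  simp

noncomputable def R (a : ℤ) (r : ℕ) : ℂ :=
  (Real.sqrt (2 ^ r) : ℂ) * ee ((((a:ℂ)^2 - 1) * ((r : ℂ) + 2)/2 + (a:ℂ))/8)

lemma step (a : ℤ) (ha : Odd a) (r : ℕ) : S a (r+4) = 2 * S a (r+2) := by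
  unfold S
  have h1 : (2:ℕ)^(r+4) = 2 * 2^(r+3) := by ring
  rw [show r+4+1 = r+5 from by omega, show r+2+1 = r+3 from by omega, h1, even_odd_split]
  have heven : ∀ m ∈ Finset.range (2^(r+3)),
      ee ((a:ℂ) * ((2*m : ℕ):ℂ)^2/(2:ℂ)^(r+5)) = ee ((a:ℂ)*(m:ℂ)^2/(2:ℂ)^(r+3)) := by
    intro m _
    congr 1
    have h2 : ((2:ℂ)^(r+5)) ≠ 0 := pow_ne_zero _ two_ne_zero
    have h3 : ((2:ℂ)^(r+3)) ≠ 0 := pow_ne_zero _ two_ne_zero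
    push_cast
    field_simp
    ring
  rw [Finset.sum_congr rfl heven, odd_part_zero a ha r, add_zero]
  have hd := double a (r+1)
  rw [show r+1+2 = r+3 from by omega, show r+1+1 = r+2 from by omega] at hd
  exact hd

lemma rhs_step (a : ℤ) (k : ℤ) (hk : a^2 - 1 = 8*k) (r : ℕ) : R a (r+2) = 2 * R a r := by
  unfold R
  have hc : ((a:ℂ))^2 - 1 = 8*(k:ℂ) := by exact_mod_cast hk
  have harg : (((a:ℂ)^2 - 1) * (((r+2:ℕ) : ℂ) + 2)/2 + (a:ℂ))/8
      = ((((a:ℂ)^2 - 1) * ((r : ℂ) + 2)/2 + (a:ℂ))/8) + ((k : ℤ) : ℂ) := by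
    push_cast
    linear_combination hc/8
  rw [harg, ee_add_int]
  have hs : Real.sqrt (2^(r+2)) = 2 * Real.sqrt (2^r) := by
    rw [show (2:ℝ)^(r+2) = 2^2 * 2^r from by ring, Real.sqrt_mul (by positivity),
      Real.sqrt_sq (by norm_num)]
  rw [hs]
  push_cast
  ring

lemma base2 (a : ℤ) (ha : Odd a) (k : ℤ) (hk : a^2 - 1 = 8*k) : S a 2 = R a 2 := by
  have hc : ((a:ℂ))^2 - 1 = 8*(k:ℂ) := by exact_mod_cast hk
  unfold S R
  rw [show (2:ℕ)^2 = 4 from rfl]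
  simp only [Finset.sum_range_succ, Finset.sum_range_zero, zero_add]
  have e0 : (a:ℂ) * ((0:ℕ):ℂ)^2/(2:ℂ)^(2+1) = 0 := by push_cast; ring
  have e1 : (a:ℂ) * ((1:ℕ):ℂ)^2/(2:ℂ)^(2+1) = (a:ℂ)/8 := by push_cast; ring
  have e2 : (a:ℂ) * ((2:ℕ):ℂ)^2/(2:ℂ)^(2+1) = ((a:ℤ):ℂ)/2 := by push_cast; ring
  have e3 : (a:ℂ) * ((3:ℕ):ℂ)^2/(2:ℂ)^(2+1) = (a:ℂ)/8 + ((a:ℤ):ℂ) := by push_cast; ring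
  rw [e0, e1, e2, e3, ee_zero, ee_half a ha, ee_add_int]
  have hargR : (((a:ℂ)^2 - 1) * (((2:ℕ) : ℂ) + 2)/2 + (a:ℂ))/8
      = (a:ℂ)/8 + ((2*k : ℤ) : ℂ) := by push_cast; linear_combination hc/4
  rw [hargR, ee_add_int]
  have hs : Real.sqrt (2^2) = 2 := Real.sqrt_sq (by norm_num)
  rw [hs]
  push_cast
  ring

lemma base3 (a : ℤ) (ha : Odd a) (k : ℤ) (hk : a^2 - 1 = 8*k) : S a 3 = R a 3 := by
  have hc : ((a:ℂ))^2 - 1 = 8*(k:ℂ) := by exact_mod_cast hk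
  unfold S R
  rw [show (2:ℕ)^3 = 8 from rfl]
  simp only [Finset.sum_range_succ, Finset.sum_range_zero, zero_add]
  have e0 : (a:ℂ) * ((0:ℕ):ℂ)^2/(2:ℂ)^(3+1) = 0 := by push_cast; ring
  have e1 : (a:ℂ) * ((1:ℕ):ℂ)^2/(2:ℂ)^(3+1) = (a:ℂ)/16 := by push_cast; ring
  have e2 : (a:ℂ) * ((2:ℕ):ℂ)^2/(2:ℂ)^(3+1) = (a:ℂ)/4 := by push_cast; ring
  have e3 : (a:ℂ) * ((3:ℕ):ℂ)^2/(2:ℂ)^(3+1) = (a:ℂ)/16 + ((a:ℤ):ℂ)/2 := by push_cast; ring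
  have e4 : (a:ℂ) * ((4:ℕ):ℂ)^2/(2:ℂ)^(3+1) = 0 + ((a:ℤ):ℂ) := by push_cast; ring
  have e5 : (a:ℂ) * ((5:ℕ):ℂ)^2/(2:ℂ)^(3+1)
      = ((a:ℂ)/16 + ((a:ℤ):ℂ)/2) + ((a:ℤ):ℂ) := by push_cast; ring
  have e6 : (a:ℂ) * ((6:ℕ):ℂ)^2/(2:ℂ)^(3+1) = (a:ℂ)/4 + ((2*a:ℤ):ℂ) := by push_cast; ring
  have e7 : (a:ℂ) * ((7:ℕ):ℂ)^2/(2:ℂ)^(3+1) = (a:ℂ)/16 + ((3*a:ℤ):ℂ) := by push_cast; ring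
  rw [e0, e1, e2, e3, e4, e5, e6, e7, ee_zero, ee_add_int, ee_add_int, ee_add_int, ee_add_int,
    ee_add, ee_half a ha, ee_zero]
  have hsum : (1:ℂ) + ee ((a:ℂ)/16) + ee ((a:ℂ)/4) + ee ((a:ℂ)/16) * (-1) + 1
      + ee ((a:ℂ)/16) * (-1) + ee ((a:ℂ)/4) + ee ((a:ℂ)/16)
      = 2 * (1 + ee ((a:ℂ)/4)) := by ring
  rw [hsum, key_eighth a ha]
  have hargR : (((a:ℂ)^2 - 1) * (((3:ℕ) : ℂ) + 2)/2 + (a:ℂ))/8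
      = ((a:ℂ)^2 + 2*(a:ℂ) - 1)/16 + ((2*k : ℤ) : ℂ) := by push_cast; linear_combination hc/4
  rw [hargR, ee_add_int]
  have hs : Real.sqrt (2^3) = 2 * Real.sqrt 2 := by
    rw [show (2:ℝ)^3 = 2^2 * 2 from by ring, Real.sqrt_mul (by positivity),
      Real.sqrt_sq (by norm_num)]
  rw [hs]
  push_cast
  ring

/-- For `r ≥ 2` and odd `a`, the quadratic Gauss sum
`Σ_{n=0}^{2^r−1} exp(2πi·a·n²/2^{r+1})` equals
`2^{r/2} · exp((2πi/8)·((a²−1)(r+2)/2 + a))`. -/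
theorem quadratic_gauss_sum_two_power
    (r : ℕ) (hr : 2 ≤ r) (a : ℤ) (ha : Odd a) :
    ∑ n ∈ Finset.range (2 ^ r),
        Complex.exp (2 * Real.pi * Complex.I * (a : ℂ) * (n : ℂ) ^ 2 / (2 : ℂ) ^ (r + 1)) =
      (Real.sqrt (2 ^ r) : ℂ) *
        Complex.exp ((2 * Real.pi * Complex.I / 8) *
          (((a : ℂ) ^ 2 - 1) * ((r : ℂ) + 2) / 2 + (a : ℂ))) := by
  obtain ⟨k, hk⟩ : ∃ k : ℤ, a^2 - 1 = 8*k := by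
    obtain ⟨b, hb⟩ := ha
    obtain ⟨t, ht⟩ := Int.even_mul_succ_self b
    exact ⟨t, by subst hb; linear_combination 4*ht⟩
  have key : ∀ m : ℕ, S a (m+2) = R a (m+2) ∧ S a (m+3) = R a (m+3) := by
    intro m
    induction m with
    | zero => exact ⟨base2 a ha k hk, base3 a ha k hk⟩
    | succ p ih =>
      constructor
      · have h := ih.2; rwa [show p+3 = p+1+2 from by omega] at h
      · calc S a (p+1+3) = 2 * S a (p+2) := by
              rw [show p+1+3 = p+4 from by omega]; exact step a ha p
          _ = 2 * R a (p+2) := by rw [ih.1]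
          _ = R a (p+2+2) := (rhs_step a k hk (p+2)).symm
          _ = R a (p+1+3) := congrArg (R a) (by omega)
  obtain ⟨s, rfl⟩ : ∃ s, r = s + 2 := ⟨r - 2, by omega⟩
  have hSR := (key s).1
  have hL : ∑ n ∈ Finset.range (2 ^ (s+2)),
      Complex.exp (2 * Real.pi * Complex.I * (a : ℂ) * (n : ℂ) ^ 2 / (2 : ℂ) ^ (s+2 + 1))
        = S a (s+2) := by
    refine Finset.sum_congr rfl fun i _ => ?_
    unfold ee
    congr 1
    ring
  have hR2 : (Real.sqrt (2 ^ (s+2)) : ℂ) *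
      Complex.exp ((2 * Real.pi * Complex.I / 8) *
        (((a : ℂ) ^ 2 - 1) * (((s+2 : ℕ) : ℂ) + 2) / 2 + (a : ℂ))) = R a (s+2) := by
    unfold R ee
    congr 1
    ring
  rw [hL, hR2]
  exact hSR
end
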